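/- arXiv:1709.07644 — 5 statements merged into one kernel-verified Lean document; each statement's English description precedes it below -/
import Mathlib

section
/- For every α ∈ (0,2), every x ∈ ℝ and every R > 0, the function u ↦ (1 − e^{ixu} + i x u 1_{{|u| ≤ R}})·|u|^{−1−α} is Lebesgue integrable on ℝ and ∫_ℝ (1 − e^{ixu} + i x u 1_{{|u| ≤ R}}) |u|^{−1−α} du = c(α)·|x|^α, where c(α) := ∫_ℝ (1 − cos u)·|u|^{−1−α} du ∈ (0,∞). In particular the value of the integral does not depend on R. -/
/-!
Near `0` the integrand is `O(u² |u|^(-1-α)) = O(|u|^(1-α))` by the second-order bound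
`‖e^{it} - 1 - it‖ ≤ 2t²`, and for `|u| > R` it is `O(|u|^(-1-α))`; both are integrable because
`0 < α < 2`. The compensator `i x u 1_{|u| ≤ R}` and the imaginary part `-sin (x u)` are odd, so
symmetrizing under `u ↦ -u` leaves only `(1 - cos (x u)) |u|^(-1-α)`, whose integral is
`c(α) |x|^α` by the substitution `v = x u`.
-/

open MeasureTheory Set

theorem integrable_of_even_of_integrableOn_Ioi {E : Type*} [NormedAddCommGroup E] {f : ℝ → E}
    (heven : ∀ u, f (-u) = f u) (hf : IntegrableOn f (Ioi 0)) : Integrable f := by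
  have hneg : IntegrableOn f (Iio 0) := by
    simpa [heven] using hf.comp_neg
  rw [← integrableOn_univ, ← Iio_union_Ici]
  exact hneg.union ((integrableOn_Ici_iff_integrableOn_Ioi).2 hf)

theorem abs_rpow_mul_sq {u : ℝ} (hu : u ≠ 0) (s : ℝ) : |u| ^ s * u ^ 2 = |u| ^ (s + 2) := by
  rw [← sq_abs, Real.rpow_add (abs_pos.2 hu), Real.rpow_two]

theorem integrable_abs_rpow_smul {E : Type*} [NormedAddCommGroup E] [NormedSpace ℝ E]
    {α : ℝ} (hα : α ∈ Ioo (0:ℝ) 2) {f : ℝ → E}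
    (hf : AEStronglyMeasurable f) {b C C' : ℝ} (hb : 0 < b)
    (h_near : ∀ u, |u| ≤ b → ‖f u‖ ≤ C * u ^ 2) (h_far : ∀ u, b < |u| → ‖f u‖ ≤ C') :
    Integrable (fun u => |u| ^ (-1 - α) • f u) := by
  obtain ⟨hα0, hα2⟩ := hα
  set g : ℝ → ℝ := fun u => if |u| ≤ b then C * |u| ^ (1 - α) else C' * |u| ^ (-1 - α)
  have hg : Integrable g := by
    refine integrable_of_even_of_integrableOn_Ioi (fun u => by simp only [g, abs_neg]) ?_
    rw [← Ioc_union_Ioi_eq_Ioi hb.le]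
    refine IntegrableOn.union ?_ ?_
    · have h : IntegrableOn (fun u : ℝ => u ^ (1 - α)) (Ioc 0 b) := by
        rw [integrableOn_Ioc_iff_integrableOn_Ioo, intervalIntegral.integrableOn_Ioo_rpow_iff hb]
        linarith
      exact IntegrableOn.congr_fun (h.const_mul C)
        (fun u hu => by simp [g, abs_of_pos hu.1, hu.2]) measurableSet_Ioc
    · exact IntegrableOn.congr_fun
        ((integrableOn_Ioi_rpow_of_lt (by linarith : -1 - α < -1) hb).const_mul C')
        (fun u hu => by simp [g, abs_of_pos (hb.trans hu), not_le.2 (mem_Ioi.1 hu)])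
        measurableSet_Ioi
  have hC : 0 ≤ C := by
    have := h_near b (abs_of_pos hb).le
    nlinarith [norm_nonneg (f b), pow_pos hb 2]
  have hmeas : Measurable fun u : ℝ => |u| ^ (-1 - α) := by fun_prop
  refine hg.mono' (hmeas.aestronglyMeasurable.smul hf) (ae_of_all _ fun u => ?_)
  rw [norm_smul, Real.norm_eq_abs, abs_of_nonneg (by positivity)]
  by_cases hub : |u| ≤ b
  · simp only [g, if_pos hub]
    rcases eq_or_ne u 0 with rfl | hu
    · simp only [abs_zero, Real.zero_rpow (by linarith : (-1 - α) ≠ 0), zero_mul]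
      positivity
    · calc |u| ^ (-1 - α) * ‖f u‖ ≤ |u| ^ (-1 - α) * (C * u ^ 2) := by gcongr; exact h_near u hub
        _ = C * |u| ^ (1 - α) := by
          rw [mul_left_comm, abs_rpow_mul_sq hu]; ring_nf
  · simp only [g, if_neg hub]
    rw [mul_comm]
    gcongr
    exact h_far u (not_le.1 hub)

theorem norm_exp_I_mul_ofReal_sub_one_sub_le (t : ℝ) :
    ‖Complex.exp (Complex.I * t) - 1 - Complex.I * t‖ ≤ 2 * t ^ 2 := by
  have hnorm : ‖Complex.I * t‖ = |t| := by simp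
  rcases le_or_gt |t| 1 with ht | ht
  · calc _ ≤ ‖Complex.I * t‖ ^ 2 := Complex.norm_exp_sub_one_sub_id_le (hnorm ▸ ht)
      _ ≤ 2 * t ^ 2 := by rw [hnorm, sq_abs]; nlinarith [sq_nonneg t]
  · calc _ ≤ ‖Complex.exp (Complex.I * t) - 1‖ + ‖Complex.I * t‖ := norm_sub_le _ _
      _ ≤ |t| + |t| := by
          rw [hnorm]; gcongr; simpa using Real.norm_exp_I_mul_ofReal_sub_one_le (x := t)
      _ ≤ 2 * t ^ 2 := by nlinarith [sq_abs t]

theorem integral_eq_integral_smul_add_comp_neg {G E : Type*} [MeasurableSpace G] [AddGroup G]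
    [MeasurableNeg G] {μ : Measure G} [μ.IsNegInvariant] [NormedAddCommGroup E]
    [NormedSpace ℝ E] {f : G → E} (hf : Integrable f μ) :
    ∫ x, f x ∂μ = ∫ x, (2:ℝ)⁻¹ • (f x + f (-x)) ∂μ := by
  rw [integral_smul, integral_add hf hf.comp_neg, integral_neg_eq_self, ← two_smul ℝ, smul_smul,
    inv_mul_cancel₀ two_ne_zero, one_smul]

theorem integral_comp_mul_mul_abs_rpow (g : ℝ → ℝ) (s : ℝ) {x : ℝ} (hx : x ≠ 0) :
    ∫ u, g (x * u) * |u| ^ s = |x| ^ (-1 - s) * ∫ u, g u * |u| ^ s := by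
  have hx' : 0 < |x| := abs_pos.2 hx
  have h : ∀ u, g (x * u) * |u| ^ s = |x| ^ (-s) * (g (x * u) * |x * u| ^ s) := by
    intro u
    rw [abs_mul, Real.mul_rpow hx'.le (abs_nonneg _), Real.rpow_neg hx'.le]
    field_simp
  simp_rw [h]
  rw [integral_const_mul, Measure.integral_comp_mul_left (fun v => g v * |v| ^ s), smul_eq_mul,
    abs_inv, ← Real.rpow_neg_one, ← mul_assoc, ← Real.rpow_add hx', neg_add_eq_sub]

theorem integrable_one_sub_cos_mul_abs_rpow {α : ℝ} (hα : α ∈ Ioo (0:ℝ) 2) :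
    Integrable (fun u : ℝ => (1 - Real.cos u) * |u| ^ (-1 - α)) := by
  have h := integrable_abs_rpow_smul hα (f := fun u => 1 - Real.cos u) (by fun_prop) one_pos
    (C := 1) (C' := 2)
    (fun u _ => by
      rw [Real.norm_eq_abs, abs_of_nonneg (by linarith [Real.cos_le_one u])]
      nlinarith [Real.one_sub_sq_div_two_le_cos (x := u), sq_nonneg u])
    (fun u _ => by
      rw [Real.norm_eq_abs, abs_of_nonneg (by linarith [Real.cos_le_one u])]
      linarith [Real.neg_one_le_cos u])
  simpa only [smul_eq_mul, mul_comm] using h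

theorem integral_one_sub_cos_mul_abs_rpow_pos {α : ℝ} (hα : α ∈ Ioo (0:ℝ) 2) :
    0 < ∫ u : ℝ, (1 - Real.cos u) * |u| ^ (-1 - α) := by
  have hnonneg : 0 ≤ fun u : ℝ => (1 - Real.cos u) * |u| ^ (-1 - α) := fun u =>
    mul_nonneg (by linarith [Real.cos_le_one u]) (by positivity)
  rw [integral_pos_iff_support_of_nonneg hnonneg (integrable_one_sub_cos_mul_abs_rpow hα)]
  -- on `(2, 3) ⊆ (π/2, 3π/2)` the cosine is negative
  have hsupp : Ioo (2:ℝ) 3 ⊆ Function.support fun u => (1 - Real.cos u) * |u| ^ (-1 - α) := by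
    intro u ⟨h2, h3⟩
    have hcos : Real.cos u ≤ 0 := Real.cos_nonpos_of_pi_div_two_le_of_le
      (by linarith [Real.pi_le_four]) (by linarith [Real.pi_gt_three])
    exact (mul_pos (by linarith) (Real.rpow_pos_of_pos (abs_pos.2 (by linarith)) _)).ne'
  refine lt_of_lt_of_le ?_ (measure_mono hsupp)
  norm_num [Real.volume_Ioo]

theorem integral_one_sub_cos_mul_mul_abs_rpow {α : ℝ} (hα : 0 < α) (x : ℝ) :
    ∫ u : ℝ, (1 - Real.cos (x * u)) * |u| ^ (-1 - α)
      = (∫ u : ℝ, (1 - Real.cos u) * |u| ^ (-1 - α)) * |x| ^ α := by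
  rcases eq_or_ne x 0 with rfl | hx
  · simp [Real.zero_rpow hα.ne']
  · rw [integral_comp_mul_mul_abs_rpow (fun v => 1 - Real.cos v) _ hx, mul_comm]
    ring_nf

theorem integrable_levy_integrand {α : ℝ} (hα : α ∈ Ioo (0:ℝ) 2) (x : ℝ) {R : ℝ} (hR : 0 < R) :
    Integrable (fun u : ℝ =>
      (1 - Complex.exp (Complex.I * (x : ℂ) * (u : ℂ))
          + Complex.I * (x : ℂ) * (u : ℂ) * ({v : ℝ | |v| ≤ R}.indicator (fun _ => (1:ℂ)) u))
        * ((|u| ^ (-1 - α) : ℝ) : ℂ)) := by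
  have hxu : ∀ u : ℝ, Complex.I * (x : ℂ) * (u : ℂ) = Complex.I * ((x * u : ℝ) : ℂ) := by
    intro u; push_cast; ring
  have h := integrable_abs_rpow_smul hα (b := R) (C := 2 * x ^ 2) (C' := 2)
    (f := fun u : ℝ => 1 - Complex.exp (Complex.I * (x : ℂ) * (u : ℂ))
          + Complex.I * (x : ℂ) * (u : ℂ) * ({v : ℝ | |v| ≤ R}.indicator (fun _ => (1:ℂ)) u))
    ?_ hR ?_ ?_
  · simpa only [Complex.real_smul, mul_comm] using h
  · have hS : MeasurableSet {v : ℝ | |v| ≤ R} := measurableSet_le measurable_abs measurable_const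
    exact ((by fun_prop : Measurable fun u : ℝ => 1 - Complex.exp (Complex.I * x * u)).add
      ((by fun_prop : Measurable fun u : ℝ => Complex.I * x * u).mul
        (measurable_const.indicator hS))).aestronglyMeasurable
  · intro u hu
    simp only [indicator_of_mem (show u ∈ {v : ℝ | |v| ≤ R} from hu), mul_one, hxu]
    rw [← norm_neg, show ∀ a b : ℂ, -(1 - a + b) = a - 1 - b by intros; ring]
    calc _ ≤ 2 * (x * u) ^ 2 := norm_exp_I_mul_ofReal_sub_one_sub_le (x * u)
      _ = 2 * x ^ 2 * u ^ 2 := by ring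
  · intro u hu
    simp only [indicator_of_notMem (show u ∉ {v : ℝ | |v| ≤ R} from not_le.2 hu), mul_zero,
      add_zero, hxu]
    calc _ ≤ ‖(1:ℂ)‖ + ‖Complex.exp (Complex.I * ((x * u : ℝ) : ℂ))‖ := norm_sub_le _ _
      _ = 2 := by rw [mul_comm, Complex.norm_exp_ofReal_mul_I]; norm_num

theorem levy_integrand_even_part (α x R u : ℝ) :
    (2:ℝ)⁻¹ •
      ((1 - Complex.exp (Complex.I * (x : ℂ) * (u : ℂ))
          + Complex.I * (x : ℂ) * (u : ℂ) * ({v : ℝ | |v| ≤ R}.indicator (fun _ => (1:ℂ)) u))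
        * ((|u| ^ (-1 - α) : ℝ) : ℂ)
      + (1 - Complex.exp (Complex.I * (x : ℂ) * ((-u : ℝ) : ℂ))
          + Complex.I * (x : ℂ) * ((-u : ℝ) : ℂ)
            * ({v : ℝ | |v| ≤ R}.indicator (fun _ => (1:ℂ)) (-u)))
        * ((|-u| ^ (-1 - α) : ℝ) : ℂ))
      = (((1 - Real.cos (x * u)) * |u| ^ (-1 - α) : ℝ) : ℂ) := by
  have hind : {v : ℝ | |v| ≤ R}.indicator (fun _ => (1:ℂ)) (-u)
      = {v : ℝ | |v| ≤ R}.indicator (fun _ => (1:ℂ)) u := by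
    simp only [indicator_apply, mem_ofPred_eq, abs_neg]
  rw [hind, abs_neg, Complex.real_smul, Complex.ofReal_mul, Complex.ofReal_sub, Complex.ofReal_one,
    Complex.ofReal_cos, Complex.cos]
  push_cast
  ring_nf

/-- For every `α ∈ (0,2)`, every `x ∈ ℝ` and every `R > 0`, the function
`u ↦ (1 − e^{ixu} + i x u 1_{|u| ≤ R})·|u|^{−1−α}` is Lebesgue integrable on `ℝ` and its
integral equals `c(α)·|x|^α`, where `c(α) := ∫ (1 − cos u)·|u|^{−1−α} du ∈ (0,∞)`.
In particular the value of the integral does not depend on `R`. -/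
theorem stmt_0 (α : ℝ) (hα : α ∈ Set.Ioo (0:ℝ) 2) (x R : ℝ) (hR : 0 < R) :
    Integrable (fun u : ℝ => (1 - Real.cos u) * |u| ^ (-1 - α)) volume ∧
    0 < (∫ u : ℝ, (1 - Real.cos u) * |u| ^ (-1 - α)) ∧
    Integrable (fun u : ℝ =>
      (1 - Complex.exp (Complex.I * (x : ℂ) * (u : ℂ))
          + Complex.I * (x : ℂ) * (u : ℂ) * ({v : ℝ | |v| ≤ R}.indicator (fun _ => (1:ℂ)) u))
        * ((|u| ^ (-1 - α) : ℝ) : ℂ)) volume ∧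
    (∫ u : ℝ,
      (1 - Complex.exp (Complex.I * (x : ℂ) * (u : ℂ))
          + Complex.I * (x : ℂ) * (u : ℂ) * ({v : ℝ | |v| ≤ R}.indicator (fun _ => (1:ℂ)) u))
        * ((|u| ^ (-1 - α) : ℝ) : ℂ))
      = (((∫ u : ℝ, (1 - Real.cos u) * |u| ^ (-1 - α)) * |x| ^ α : ℝ) : ℂ) := by
  have hF := integrable_levy_integrand hα x hR
  refine ⟨integrable_one_sub_cos_mul_abs_rpow hα, integral_one_sub_cos_mul_abs_rpow_pos hα, hF, ?_⟩
  rw [integral_eq_integral_smul_add_comp_neg hF]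
  simp only [levy_integrand_even_part]
  rw [integral_complex_ofReal, integral_one_sub_cos_mul_mul_abs_rpow hα.1]
end

section
/- There exists a constant C₀ > 0, depending only on β, such that for every K > 0 and every ε > 0 there is T₀ ≥ 1 with ∫_K^∞ ψ_T(z)^{−1} dz ≤ C₀·K^{1−β} + ε for all T ≥ T₀. -/
/-!
Along `u = T^{-1/β} → 0` the stable normalization says that `ψ` is regularly varying at `0` with
index `β`. Karamata's uniform convergence theorem upgrades this to Potter's bound
`ψ x ≤ e^δ (x/s)^{β-δ} ψ s` for `0 < x ≤ s ≤ s₁`, where `δ = (β-1)/2` keeps `β - δ > 1`.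
After the substitution `s = z u`, Potter's bound makes the part of `∫_K^∞ ψ_T⁻¹` coming from
`s ≤ s₁` at most `C K / ψ_T(K) → C K^{1-β}` with `C = e^δ / (β - δ - 1)`. The part from `s > s₁`
is a fixed integral times `ψ(u) / (u ψ_T(1))`, which tends to `0` since `ψ(u) = O(u^{β-δ})`.
-/

open MeasureTheory

/-- The rescaled characteristic exponent `ψ_T(z) := T · f(T^{1/β})⁻¹ · ψ(z·T^{−1/β})`. -/
noncomputable def psiT (β : ℝ) (ψ f : ℝ → ℝ) (T z : ℝ) : ℝ :=
  T * (f (T ^ (1/β)))⁻¹ * ψ (z * T ^ (-(1/β)))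

open Filter Set Topology

lemma exists_mem_Icc_add_notMem {B B' : Set ℝ} {c : ℝ} (hc : c ∈ Icc (0:ℝ) 1)
    (h : volume.restrict (Icc 0 2) B + volume.restrict (Icc 0 2) B' < 1) :
    ∃ x ∈ Icc (0:ℝ) 1, c + x ∉ B ∧ x ∉ B' := by
  by_contra! hcover
  have hsub : Icc (0:ℝ) 1 ⊆ (fun x => c + x) ⁻¹' (B ∩ Icc 0 2) ∪ B' ∩ Icc 0 2 := by
    intro x hx
    by_cases hB : c + x ∈ B
    · exact Or.inl ⟨hB, by constructor <;> linarith [hx.1, hx.2, hc.1, hc.2]⟩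
    · exact Or.inr ⟨hcover x hx hB, hx.1, by linarith [hx.2]⟩
  rw [Measure.restrict_apply' measurableSet_Icc, Measure.restrict_apply' measurableSet_Icc,
    ← measure_preimage_add volume c] at h
  have := (measure_mono (μ := volume) hsub).trans (measure_union_le _ _)
  simp only [Real.volume_Icc, sub_zero, ENNReal.ofReal_one] at this
  exact (this.trans_lt h).false

/-- The uniform convergence theorem of Karamata, in additive form. -/
lemma tendstoUniformlyOn_add_sub_of_measurable {q : ℝ → ℝ} (hq : Measurable q)
    (h : ∀ t, Tendsto (fun u => q (u + t) - q u) atTop (𝓝 0)) :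
    TendstoUniformlyOn (fun u t => q (u + t) - q u) 0 atTop (Icc 0 1) := by
  rw [Metric.tendstoUniformlyOn_iff]
  intro δ hδ
  set bad : ℝ → Set ℝ := fun u => {t | ENNReal.ofReal (δ / 2) ≤ edist (q (u + t) - q u) 0}
  have hbad : ∀ u t, t ∉ bad u → |q (u + t) - q u| < δ / 2 := fun u t ht => by
    simpa [bad, edist_dist, ENNReal.ofReal_lt_ofReal_iff (half_pos hδ), Real.dist_eq] using ht
  -- By convergence in measure the bad sets are small for all large `u`; a point `x` outside
  -- the bad sets of both `u` and `u + t` links `q (u + t)` to `q u` through `q (u + t + x)`.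
  have hsmall : ∀ᶠ u in atTop, volume.restrict (Icc (0:ℝ) 2) (bad u) < 1 / 2 := by
    refine Tendsto.eventually_lt_const (v := 0) (by norm_num)
      (tendsto_of_seq_tendsto fun x hx => ?_)
    refine tendstoInMeasure_of_tendsto_ae (g := 0) (fun n => ?_)
      (ae_of_all _ fun t => (h t).comp hx) _ (by simpa using half_pos hδ)
    exact ((hq.comp (measurable_const_add _)).sub_const _).aestronglyMeasurable
  obtain ⟨U, hU⟩ := hsmall.exists_forall_of_atTop
  filter_upwards [eventually_ge_atTop U] with u hu t ht
  have hsum :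
      volume.restrict (Icc (0:ℝ) 2) (bad u) + volume.restrict (Icc 0 2) (bad (u + t)) < 1 :=
    (ENNReal.add_lt_add (hU u hu) (hU (u + t) (by linarith [ht.1]))).trans_eq
      (ENNReal.add_halves 1)
  obtain ⟨x, -, hx₁, hx₂⟩ := exists_mem_Icc_add_notMem ht hsum
  have h₁ := hbad _ _ hx₁
  have h₂ := hbad _ _ hx₂
  rw [← add_assoc] at h₁
  simp only [Pi.zero_apply, dist_zero_left, Real.norm_eq_abs]
  calc |q (u + t) - q u| ≤ |q (u + t) - q (u + t + x)| + |q (u + t + x) - q u| :=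
        abs_sub_le _ _ _
    _ < δ := by rw [abs_sub_comm]; linarith

lemma abs_sub_le_of_forall_Icc {q : ℝ → ℝ} {U δ : ℝ}
    (hq : ∀ u ≥ U, ∀ t ∈ Icc (0:ℝ) 1, |q (u + t) - q u| ≤ δ) {v w : ℝ} (hv : U ≤ v)
    (hvw : v ≤ w) : |q w - q v| ≤ δ * (w - v) + δ := by
  have hδ : 0 ≤ δ := (abs_nonneg _).trans (hq v hv 0 ⟨le_rfl, zero_le_one⟩)
  have hsteps : ∀ n : ℕ, |q (v + n) - q v| ≤ δ * n := by
    intro n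
    induction n with
    | zero => simp
    | succ m ih =>
      have hstep := hq (v + m) (by linarith [m.cast_nonneg (α := ℝ)]) 1 ⟨zero_le_one, le_rfl⟩
      push_cast
      calc |q (v + (m + 1)) - q v| ≤ |q (v + m + 1) - q (v + m)| + |q (v + m) - q v| := by
            rw [← add_assoc]; exact abs_sub_le _ _ _
        _ ≤ δ * (m + 1) := by linarith
  set n := ⌊w - v⌋₊
  have hn : (n : ℝ) ≤ w - v := Nat.floor_le (by linarith)
  have hlast := hq (v + n) (by linarith [n.cast_nonneg (α := ℝ)]) (w - (v + n))
    ⟨by linarith, by linarith [Nat.lt_floor_add_one (w - v)]⟩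
  rw [add_sub_cancel] at hlast
  calc |q w - q v| ≤ |q w - q (v + n)| + |q (v + n) - q v| := abs_sub_le _ _ _
    _ ≤ δ * (w - v) + δ := by nlinarith [hsteps n]

def IsRegularlyVaryingAtZero (ψ : ℝ → ℝ) (β : ℝ) : Prop :=
  ∀ z > 0, Tendsto (fun x => ψ (z * x) / ψ x) (𝓝[>] 0) (𝓝 (z ^ β))

/-- Writing `ψ x = x ^ β * L x`, this is `log L (exp (-u))`. -/
noncomputable def logSlowFactor (ψ : ℝ → ℝ) (β u : ℝ) : ℝ :=
  Real.log (ψ (Real.exp (-u))) + β * u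

lemma logSlowFactor_neg_log {ψ : ℝ → ℝ} {β y : ℝ} (hy : 0 < y) :
    logSlowFactor ψ β (-Real.log y) = Real.log (ψ y) - β * Real.log y := by
  rw [logSlowFactor, neg_neg, Real.exp_log hy]
  ring

lemma measurable_logSlowFactor {ψ : ℝ → ℝ} (hψ : Measurable ψ) (β : ℝ) :
    Measurable (logSlowFactor ψ β) := by
  unfold logSlowFactor
  fun_prop

lemma IsRegularlyVaryingAtZero.tendsto_logSlowFactor_add_sub {ψ : ℝ → ℝ} {β : ℝ}
    (hψ : IsRegularlyVaryingAtZero ψ β) (hpos : ∀ x > 0, 0 < ψ x) (t : ℝ) :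
    Tendsto (fun u => logSlowFactor ψ β (u + t) - logSlowFactor ψ β u) atTop (𝓝 0) := by
  have hexp : Tendsto (fun u => Real.exp (-u)) atTop (𝓝[>] 0) :=
    tendsto_nhdsWithin_iff.2 ⟨Real.tendsto_exp_neg_atTop_nhds_zero,
      Eventually.of_forall fun u => Real.exp_pos _⟩
  have hratio := (hψ _ (Real.exp_pos (-t))).comp hexp
  have hlog := ((Real.continuousAt_log (Real.rpow_pos_of_pos (Real.exp_pos (-t)) β).ne').tendsto
    |>.comp hratio).add_const (β * t)
  rw [Real.log_rpow (Real.exp_pos _), Real.log_exp, mul_neg, neg_add_cancel] at hlog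
  refine hlog.congr fun u => ?_
  have hu : Real.exp (-(u + t)) = Real.exp (-t) * Real.exp (-u) := by
    rw [← Real.exp_add]; ring_nf
  simp only [Function.comp_apply, logSlowFactor, hu]
  rw [Real.log_div (hpos _ (by positivity)).ne' (hpos _ (Real.exp_pos _)).ne']
  ring

def PotterBound (ψ : ℝ → ℝ) (A γ s₁ : ℝ) : Prop :=
  ∀ x s, 0 < x → x ≤ s → s ≤ s₁ → ψ x ≤ A * (x / s) ^ γ * ψ s

lemma IsRegularlyVaryingAtZero.exists_potterBound {ψ : ℝ → ℝ} {β : ℝ}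
    (hψ : IsRegularlyVaryingAtZero ψ β) (hmeas : Measurable ψ) (hpos : ∀ x > 0, 0 < ψ x)
    {δ : ℝ} (hδ : 0 < δ) : ∃ s₁ ∈ Ioc (0:ℝ) 1, PotterBound ψ (Real.exp δ) (β - δ) s₁ := by
  have hunif := Metric.tendstoUniformlyOn_iff.1 (tendstoUniformlyOn_add_sub_of_measurable
    (measurable_logSlowFactor hmeas β) (hψ.tendsto_logSlowFactor_add_sub hpos)) δ hδ
  obtain ⟨U, hU⟩ := (hunif.and (eventually_ge_atTop 0)).exists_forall_of_atTop
  have hq : ∀ u ≥ U, ∀ t ∈ Icc (0:ℝ) 1,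
      |logSlowFactor ψ β (u + t) - logSlowFactor ψ β u| ≤ δ := fun u hu t ht => by
    simpa [Real.dist_eq, abs_sub_comm] using ((hU u hu).1 t ht).le
  refine ⟨Real.exp (-U), ⟨Real.exp_pos _, Real.exp_le_one_iff.2 (by linarith [(hU U le_rfl).2])⟩,
    fun x s hx hxs hs => ?_⟩
  have hs0 : 0 < s := hx.trans_le hxs
  have hv : U ≤ -Real.log s := by
    linarith [Real.log_le_log hs0 hs, Real.log_exp (-U)]
  have hchain := abs_sub_le_of_forall_Icc hq hv (neg_le_neg (Real.log_le_log hx hxs))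
  rw [logSlowFactor_neg_log hx, logSlowFactor_neg_log hs0] at hchain
  rw [← Real.log_le_log_iff (hpos x hx) (by have := hpos s hs0; positivity),
    Real.log_mul (by positivity) (hpos s hs0).ne', Real.log_mul (by positivity) (by positivity),
    Real.log_exp, Real.log_rpow (div_pos hx hs0), Real.log_div hx.ne' hs0.ne']
  linarith [(abs_le.1 hchain).2]

namespace PotterBound

variable {ψ : ℝ → ℝ} {A γ s₁ : ℝ}

lemma inv_le (h : PotterBound ψ A γ s₁) (hpos : ∀ x > 0, 0 < ψ x) {x s : ℝ} (hx : 0 < x)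
    (hxs : x ≤ s) (hs : s ≤ s₁) : (ψ s)⁻¹ ≤ A * x ^ γ / ψ x * s ^ (-γ) := by
  have hs0 : 0 < s := hx.trans_le hxs
  have hψx := hpos x hx
  have hψs := hpos s hs0
  have hbound := h x s hx hxs hs
  rw [Real.div_rpow hx.le hs0.le] at hbound
  calc (ψ s)⁻¹ = ψ x / (ψ x * ψ s) := by field_simp
    _ ≤ A * (x ^ γ / s ^ γ) * ψ s / (ψ x * ψ s) := by gcongr
    _ = A * x ^ γ / ψ x * s ^ (-γ) := by rw [Real.rpow_neg hs0.le]; field_simp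

lemma integral_Ioc_inv_le (h : PotterBound ψ A γ s₁) (hpos : ∀ x > 0, 0 < ψ x) (hA : 0 ≤ A)
    (hγ : 1 < γ) {x : ℝ} (hx : 0 < x)
    (hint : IntegrableOn (fun s => (ψ s)⁻¹) (Ioc x s₁)) :
    ∫ s in Ioc x s₁, (ψ s)⁻¹ ≤ A / (γ - 1) * (x / ψ x) := by
  have hψx := hpos x hx
  set c := A * x ^ γ / ψ x with hc
  have hIoi : IntegrableOn (fun s => c * s ^ (-γ)) (Ioi x) :=
    (integrableOn_Ioi_rpow_of_lt (by linarith) hx).const_mul c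
  calc ∫ s in Ioc x s₁, (ψ s)⁻¹ ≤ ∫ s in Ioc x s₁, c * s ^ (-γ) :=
        setIntegral_mono_on hint (hIoi.mono_set Ioc_subset_Ioi_self) measurableSet_Ioc
          fun s hs => h.inv_le hpos hx hs.1.le hs.2
    _ ≤ ∫ s in Ioi x, c * s ^ (-γ) := by
        refine setIntegral_mono_set hIoi ?_ Ioc_subset_Ioi_self.eventuallyLE
        filter_upwards [self_mem_ae_restrict measurableSet_Ioi] with s hs
        have : 0 < s := hx.trans hs
        positivity
    _ = c * (x ^ (1 - γ) / (γ - 1)) := by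
        rw [integral_const_mul, integral_Ioi_rpow_of_lt (by linarith) hx, neg_add_eq_sub,
          neg_div, ← div_neg, neg_sub]
    _ = A / (γ - 1) * (x / ψ x) := by
        rw [hc, Real.rpow_sub hx, Real.rpow_one]
        field_simp

lemma tendsto_div_self (h : PotterBound ψ A γ s₁) (hpos : ∀ x > 0, 0 < ψ x) (hγ : 1 < γ)
    (hs₁ : 0 < s₁) : Tendsto (fun u => ψ u / u) (𝓝[>] 0) (𝓝 0) := by
  have hpow : Tendsto (fun u : ℝ => A * ψ s₁ / s₁ ^ γ * u ^ (γ - 1)) (𝓝[>] 0) (𝓝 0) := by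
    have := ((Real.continuousAt_rpow_const 0 (γ - 1) (Or.inr (by linarith))).tendsto.mono_left
      (nhdsWithin_le_nhds (s := Ioi 0))).const_mul (A * ψ s₁ / s₁ ^ γ)
    rwa [Real.zero_rpow (by linarith), mul_zero] at this
  refine tendsto_of_tendsto_of_tendsto_of_le_of_le' tendsto_const_nhds hpow ?_ ?_
  · filter_upwards [self_mem_nhdsWithin] with u hu
    exact (div_pos (hpos u hu) hu).le
  · filter_upwards [Ioc_mem_nhdsGT hs₁] with u hu
    calc ψ u / u ≤ A * (u / s₁) ^ γ * ψ s₁ / u :=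
          div_le_div_of_nonneg_right (h u s₁ hu.1 hu.2 le_rfl) hu.1.le
      _ = A * ψ s₁ / s₁ ^ γ * u ^ (γ - 1) := by
          rw [Real.div_rpow hu.1.le hs₁.le, Real.rpow_sub_one hu.1.ne']
          field_simp

end PotterBound

section psiT

variable {β : ℝ} {ψ f : ℝ → ℝ} {T : ℝ}

lemma inv_psiT_eq (hψ : ψ (T ^ (-(1/β))) ≠ 0) (z : ℝ) :
    (psiT β ψ f T z)⁻¹ =
      ψ (T ^ (-(1/β))) * (psiT β ψ f T 1)⁻¹ * (ψ (z * T ^ (-(1/β))))⁻¹ := by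
  simp only [psiT, one_mul, mul_inv]
  field_simp

lemma psiT_div_psiT_one (h : psiT β ψ f T 1 ≠ 0) (z : ℝ) :
    psiT β ψ f T z / psiT β ψ f T 1 = ψ (z * T ^ (-(1/β))) / ψ (T ^ (-(1/β))) := by
  simp only [psiT, one_mul] at h ⊢
  exact mul_div_mul_left _ _ (left_ne_zero_of_mul h)

lemma isRegularlyVaryingAtZero_of_tendsto_psiT (hβ : 0 < β)
    (h : ∀ z : ℝ, z ≠ 0 → Tendsto (fun T => psiT β ψ f T z) atTop (𝓝 (|z| ^ β))) :
    IsRegularlyVaryingAtZero ψ β := by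
  intro z hz
  have h1 : Tendsto (fun T => psiT β ψ f T 1) atTop (𝓝 1) := by
    simpa using h 1 one_ne_zero
  have hratio : Tendsto (fun T : ℝ => ψ (z * T ^ (-(1/β))) / ψ (T ^ (-(1/β)))) atTop
      (𝓝 (z ^ β)) := by
    have := (h z hz.ne').div h1 one_ne_zero
    rw [abs_of_pos hz, div_one] at this
    exact this.congr' ((h1.eventually_ne one_ne_zero).mono fun T hT => psiT_div_psiT_one hT z)
  refine (hratio.comp (tendsto_rpow_neg_nhdsGT_zero (neg_neg_of_pos hβ))).congr' ?_
  filter_upwards [self_mem_nhdsWithin] with x hx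
  have hx' : (x ^ (-β)) ^ (-(1/β)) = x := by
    rw [← Real.rpow_mul (le_of_lt hx), neg_mul_neg, mul_one_div_cancel hβ.ne', Real.rpow_one]
  simp only [Function.comp_apply, hx']

lemma integral_Ioi_inv_psiT (hT : 0 < T) (hψ : ψ (T ^ (-(1/β))) ≠ 0) (K : ℝ) :
    ∫ z in Ioi K, (psiT β ψ f T z)⁻¹ =
      ψ (T ^ (-(1/β))) / T ^ (-(1/β)) * (psiT β ψ f T 1)⁻¹ *
        ∫ s in Ioi (K * T ^ (-(1/β))), (ψ s)⁻¹ := by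
  have hu : 0 < T ^ (-(1/β)) := Real.rpow_pos_of_pos hT _
  rw [funext (inv_psiT_eq (f := f) hψ), integral_const_mul,
    integral_comp_mul_right_Ioi (fun s => (ψ s)⁻¹) K hu, smul_eq_mul]
  ring

lemma integral_Ioi_inv_psiT_le (hpos : ∀ x > 0, 0 < ψ x) (hT : 0 < T)
    (h1 : 0 ≤ psiT β ψ f T 1) {C K s₁ : ℝ} (hKu : K * T ^ (-(1/β)) ≤ s₁)
    (hint : IntegrableOn (fun s => (ψ s)⁻¹) (Ioc (K * T ^ (-(1/β))) s₁))
    (htail : IntegrableOn (fun s => (ψ s)⁻¹) (Ioi s₁))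
    (hblock : ∫ s in Ioc (K * T ^ (-(1/β))) s₁, (ψ s)⁻¹ ≤
      C * (K * T ^ (-(1/β)) / ψ (K * T ^ (-(1/β))))) :
    ∫ z in Ioi K, (psiT β ψ f T z)⁻¹ ≤
      C * K * (psiT β ψ f T K)⁻¹ +
        ψ (T ^ (-(1/β))) / T ^ (-(1/β)) * (psiT β ψ f T 1)⁻¹ * ∫ s in Ioi s₁, (ψ s)⁻¹ := by
  have hu : 0 < T ^ (-(1/β)) := Real.rpow_pos_of_pos hT _
  have hψu := hpos _ hu
  rw [integral_Ioi_inv_psiT hT hψu.ne', inv_psiT_eq hψu.ne' K,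
    ← Ioc_union_Ioi_eq_Ioi hKu,
    setIntegral_union (Ioc_disjoint_Ioi le_rfl) measurableSet_Ioi hint htail]
  calc ψ (T ^ (-(1/β))) / T ^ (-(1/β)) * (psiT β ψ f T 1)⁻¹ *
        ((∫ s in Ioc (K * T ^ (-(1/β))) s₁, (ψ s)⁻¹) + ∫ s in Ioi s₁, (ψ s)⁻¹)
      ≤ ψ (T ^ (-(1/β))) / T ^ (-(1/β)) * (psiT β ψ f T 1)⁻¹ *
        (C * (K * T ^ (-(1/β)) / ψ (K * T ^ (-(1/β)))) + ∫ s in Ioi s₁, (ψ s)⁻¹) := by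
        gcongr
    _ = _ := by
        field_simp

lemma eventually_integral_Ioi_inv_psiT_le (hβ : 0 < β) (hpos : ∀ x > 0, 0 < ψ x)
    (hstable : ∀ z : ℝ, z ≠ 0 → Tendsto (fun T => psiT β ψ f T z) atTop (𝓝 (|z| ^ β)))
    {A γ s₁ : ℝ} (hpotter : PotterBound ψ A γ s₁) (hA : 0 ≤ A) (hγ : 1 < γ) (hs₁ : 0 < s₁)
    (hint : ∀ a > 0, IntegrableOn (fun s => (ψ s)⁻¹) (Ioc a s₁))
    (htail : IntegrableOn (fun s => (ψ s)⁻¹) (Ioi s₁)) {K ε : ℝ} (hK : 0 < K) (hε : 0 < ε) :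
    ∀ᶠ T in atTop, ∫ z in Ioi K, (psiT β ψ f T z)⁻¹ ≤ A / (γ - 1) * K ^ (1 - β) + ε := by
  set M := ∫ s in Ioi s₁, (ψ s)⁻¹
  have hu : Tendsto (fun T : ℝ => T ^ (-(1/β))) atTop (𝓝[>] 0) :=
    tendsto_nhdsWithin_iff.2 ⟨tendsto_rpow_neg_atTop (by positivity),
      (eventually_gt_atTop 0).mono fun T hT => Real.rpow_pos_of_pos hT _⟩
  have h1 : Tendsto (fun T => psiT β ψ f T 1) atTop (𝓝 1) := by
    simpa using hstable 1 one_ne_zero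
  have hbound : ∀ᶠ T in atTop, ∫ z in Ioi K, (psiT β ψ f T z)⁻¹ ≤
      A / (γ - 1) * K * (psiT β ψ f T K)⁻¹ +
        ψ (T ^ (-(1/β))) / T ^ (-(1/β)) * (psiT β ψ f T 1)⁻¹ * M := by
    have hKu : Tendsto (fun T : ℝ => K * T ^ (-(1/β))) atTop (𝓝 0) := by
      simpa using (tendsto_nhdsWithin_iff.1 hu).1.const_mul K
    filter_upwards [eventually_gt_atTop 0, h1.eventually_const_le zero_lt_one,
      hKu.eventually_le_const hs₁] with T hT hT1 hKu
    have hKu0 : 0 < K * T ^ (-(1/β)) := by positivity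
    exact integral_Ioi_inv_psiT_le hpos hT hT1 hKu (hint _ hKu0) htail
      (hpotter.integral_Ioc_inv_le hpos hA hγ hKu0 (hint _ hKu0))
  have hlim : Tendsto (fun T => A / (γ - 1) * K * (psiT β ψ f T K)⁻¹ +
      ψ (T ^ (-(1/β))) / T ^ (-(1/β)) * (psiT β ψ f T 1)⁻¹ * M) atTop
      (𝓝 (A / (γ - 1) * K ^ (1 - β))) := by
    have hmain := ((hstable K hK.ne').inv₀ (by positivity)).const_mul (A / (γ - 1) * K)
    have hdecay : Tendsto (fun T => ψ (T ^ (-(1/β))) / T ^ (-(1/β)) * (psiT β ψ f T 1)⁻¹ * M)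
        atTop (𝓝 0) := by
      simpa using (((hpotter.tendsto_div_self hpos hγ hs₁).comp hu).mul
        (h1.inv₀ one_ne_zero)).mul_const M
    convert hmain.add hdecay using 2
    rw [abs_of_pos hK, Real.rpow_sub hK, Real.rpow_one]
    ring
  filter_upwards [hbound, hlim.eventually_lt_const (lt_add_of_pos_right _ hε)] with T hle hlt
  exact hle.trans hlt.le

end psiT

theorem stmt_4_general (β : ℝ) (hβ : β ∈ Set.Ioo (1:ℝ) 2)
    (ψ f : ℝ → ℝ) (hψ_meas : Measurable ψ)
    (hψ_pos : ∀ z : ℝ, z ≠ 0 → 0 < ψ z)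
    (hstable : ∀ z : ℝ, z ≠ 0 →
      Filter.Tendsto (fun T : ℝ => psiT β ψ f T z) Filter.atTop (nhds (|z| ^ β)))
    (hint : IntegrableOn (fun z : ℝ => (ψ z)⁻¹) (Set.Ioi 1) volume)
    (hloc : ∀ a b : ℝ, 0 < a → IntegrableOn (fun z : ℝ => (ψ z)⁻¹) (Set.Icc a b) volume) :
    ∃ C₀ > (0:ℝ), ∀ K > (0:ℝ), ∀ ε > (0:ℝ), ∃ T₀ ≥ (1:ℝ), ∀ T ≥ T₀,
      (∫ z in Set.Ioi K, (psiT β ψ f T z)⁻¹) ≤ C₀ * K ^ (1 - β) + ε := by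
  obtain ⟨hβ1, -⟩ := hβ
  have hpos : ∀ x > 0, 0 < ψ x := fun x hx => hψ_pos x hx.ne'
  have hIoc : ∀ a b, 0 < a → IntegrableOn (fun s => (ψ s)⁻¹) (Ioc a b) := fun a b ha =>
    (hloc a b ha).mono_set Ioc_subset_Icc_self
  obtain ⟨s₁, ⟨hs₁, hs₁_le⟩, hpotter⟩ :=
    (isRegularlyVaryingAtZero_of_tendsto_psiT (by linarith) hstable).exists_potterBound
      hψ_meas hpos (show 0 < (β - 1) / 2 by linarith)
  have htail : IntegrableOn (fun s => (ψ s)⁻¹) (Ioi s₁) := by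
    rw [← Ioc_union_Ioi_eq_Ioi hs₁_le]
    exact (hIoc s₁ 1 hs₁).union hint
  have hγ : 1 < β - (β - 1) / 2 := by linarith
  refine ⟨Real.exp ((β - 1) / 2) / (β - (β - 1) / 2 - 1), div_pos (Real.exp_pos _) (by linarith),
    fun K hK ε hε => ?_⟩
  obtain ⟨T₀, hT₀⟩ := (eventually_integral_Ioi_inv_psiT_le (by linarith) hpos hstable hpotter
    (Real.exp_pos _).le hγ hs₁ (fun a ha => hIoc a s₁ ha) htail hK hε).exists_forall_of_atTop
  exact ⟨max T₀ 1, le_max_right _ _, fun T hT => hT₀ T (le_of_max_le_left hT)⟩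

/-- Fix `β ∈ (1,2)`; let `ψ` be measurable, even, nonnegative and positive
off `0`, satisfying the stable normalization condition `ψ_T(z) → |z|^β` (`z ≠ 0`),
`∫_1^∞ ψ(z)⁻¹ dz < ∞`, and `1/ψ` locally integrable on `(0,∞)`. Then there exists
`C₀ > 0`, depending only on `β`, such that for every `K > 0` and every `ε > 0` there is
`T₀ ≥ 1` with `∫_K^∞ ψ_T(z)⁻¹ dz ≤ C₀·K^{1−β} + ε` for all `T ≥ T₀`. -/
theorem stmt_4 (β : ℝ) (hβ : β ∈ Set.Ioo (1:ℝ) 2)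
    (ψ f : ℝ → ℝ) (hψ_meas : Measurable ψ) (hψ_even : ∀ z : ℝ, ψ (-z) = ψ z)
    (hψ_nonneg : ∀ z : ℝ, 0 ≤ ψ z) (hψ_pos : ∀ z : ℝ, z ≠ 0 → 0 < ψ z)
    (hf_pos : ∀ x > (0:ℝ), 0 < f x)
    (hstable : ∀ z : ℝ, z ≠ 0 →
      Filter.Tendsto (fun T : ℝ => psiT β ψ f T z) Filter.atTop (nhds (|z| ^ β)))
    (hint : IntegrableOn (fun z : ℝ => (ψ z)⁻¹) (Set.Ioi 1) volume)
    (hloc : ∀ a b : ℝ, 0 < a → IntegrableOn (fun z : ℝ => (ψ z)⁻¹) (Set.Icc a b) volume) :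
    ∃ C₀ > (0:ℝ), ∀ K > (0:ℝ), ∀ ε > (0:ℝ), ∃ T₀ ≥ (1:ℝ), ∀ T ≥ T₀,
      (∫ z in Set.Ioi K, (psiT β ψ f T z)⁻¹) ≤ C₀ * K ^ (1 - β) + ε :=
  stmt_4_general β hβ ψ f hψ_meas hψ_pos hstable hint hloc
end

section
/- Assume in addition there exists κ ∈ (0,1) with ∫_1^∞ ψ(w)^{−κ} dw < ∞. Then there exist δ ∈ (0, 1 − 1/β), c₀ > 0 and T₀ ≥ 1 such that for all T ≥ T₀ and all t ∈ (0,1), ∫_0^t ∫_ℝ e^{−u·ψ_T(w)} dw du ≤ c₀·t^δ. -/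
open MeasureTheory

/-!
Write `ψ_T(w) = D_T ψ(w T^{-1/β})`. Stable normalization at `z = 1, 2` gives
`D_{2^β S} ≥ 2^ρ D_S` for every `ρ < β` and large `S`, and an Egorov argument gives `ψ_T ≥ 1/2`
on `[1, 2]` for large `T`. Iterating the doubling yields the Potter-type bounds
`ψ_T(w) ≳ w^ρ` for `1 ≤ w ≤ (T/T₀)^{1/β}` and `D_T ≳ T^{ρ/β}`.

Pick `κ' ∈ (1/β, 1)` with `κ ≤ κ'` and `ρ < β` with `ρκ' > 1`. By `e^{-x} ≤ x^{-κ'}`, the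
inner integral is `O(u^{-κ'})`: the range `|w| ≤ 1` contributes `O(1)`, the Potter range at most
`∫_1^∞ (u w^ρ)^{-κ'} dw`, and the tail, after substituting `v = w T^{-1/β}`, equals
`(u D_T)^{-κ'} T^{1/β} ∫_{v > T₀^{-1/β}} ψ^{-κ'}`, which stays bounded because `ρκ' ≥ 1`.
Integrating `u^{-κ'}` over `(0, t]` gives `δ = 1 - κ'`.
-/

open Filter Set Topology

/-- The factor `D_T`, so that `ψ_T(z) = D_T ψ(z T^{-1/β})`. -/
noncomputable def normalizer (β : ℝ) (f : ℝ → ℝ) (T : ℝ) : ℝ :=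
  T * (f (T ^ (1/β)))⁻¹

lemma exp_neg_le_rpow_neg {k x : ℝ} (hk0 : 0 ≤ k) (hk1 : k ≤ 1) (hx : 0 < x) :
    Real.exp (-x) ≤ x ^ (-k) := by
  rcases le_or_gt 1 x with h | h
  · calc Real.exp (-x) ≤ x⁻¹ := by
          rw [Real.exp_neg]; exact inv_anti₀ hx (by linarith [Real.add_one_le_exp x])
    _ = x ^ (-1 : ℝ) := (Real.rpow_neg_one x).symm
    _ ≤ x ^ (-k) := Real.rpow_le_rpow_of_exponent_le h (by linarith)
  · calc Real.exp (-x) ≤ 1 := Real.exp_le_one_iff.mpr (by linarith)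
    _ ≤ x ^ (-k) := Real.one_le_rpow_of_pos_of_le_one_of_nonpos hx h.le (by linarith)

lemma rpow_neg_le_rpow_neg_add_inv {y a b : ℝ} (hy : 0 < y) (hab : a ≤ b) (hb : b ≤ 1) :
    y ^ (-b) ≤ y ^ (-a) + y⁻¹ := by
  rcases le_or_gt 1 y with h | h
  · have := Real.rpow_le_rpow_of_exponent_le h (neg_le_neg hab)
    linarith [inv_nonneg.2 hy.le]
  · have := Real.rpow_le_rpow_of_exponent_ge hy h.le (neg_le_neg hb)
    rw [Real.rpow_neg_one] at this
    linarith [Real.rpow_nonneg hy.le (-a)]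

lemma integrableOn_rpow_neg_Ioi {ψ : ℝ → ℝ} (hψ_meas : Measurable ψ)
    (hψ_pos : ∀ z : ℝ, z ≠ 0 → 0 < ψ z) {a κ κ' : ℝ} (ha : 0 < a) (hκ : κ ≤ κ')
    (hκ'0 : 0 ≤ κ') (hκ'1 : κ' ≤ 1) (hloc : IntegrableOn (fun z => (ψ z)⁻¹) (Icc a 1))
    (hint : IntegrableOn (fun z => (ψ z)⁻¹) (Ioi 1))
    (hκint : IntegrableOn (fun z => ψ z ^ (-κ)) (Ioi 1)) :
    IntegrableOn (fun z => ψ z ^ (-κ')) (Ioi a) := by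
  have dominate : ∀ {s : Set ℝ} {b : ℝ}, MeasurableSet s → s ⊆ Ioi 0 → b ≤ κ' →
      IntegrableOn (fun z => ψ z ^ (-b) + (ψ z)⁻¹) s →
      IntegrableOn (fun z => ψ z ^ (-κ')) s := by
    intro s b hs hs0 hb h
    refine h.mono' (hψ_meas.pow_const _).aestronglyMeasurable
      ((ae_restrict_iff' hs).2 (.of_forall fun z hz => ?_))
    have hz : 0 < ψ z := hψ_pos z (hs0 hz).ne'
    rw [Real.norm_of_nonneg (by positivity)]
    exact rpow_neg_le_rpow_neg_add_inv hz hb hκ'1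
  have hone : IntegrableOn (fun _ => (1:ℝ)) (Icc a 1) := integrableOn_const measure_Icc_lt_top.ne
  have hIcc := dominate measurableSet_Icc (fun z hz => ha.trans_le hz.1) hκ'0
    (by simpa only [neg_zero, Real.rpow_zero, Pi.add_def] using hone.add hloc)
  have hIoi := dominate measurableSet_Ioi (fun z (hz : 1 < z) => zero_lt_one.trans hz) hκ
    (hκint.add hint)
  exact (hIcc.union hIoi).mono_set fun z hz => (le_or_gt z 1).imp (fun h => ⟨hz.le, h⟩) id

section Rescaling

variable {β : ℝ} {ψ f : ℝ → ℝ}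

lemma psiT_eq_normalizer_mul (T z : ℝ) :
    psiT β ψ f T z = normalizer β f T * ψ (z * T ^ (-(1/β))) := rfl

lemma normalizer_pos (hf_pos : ∀ x > (0:ℝ), 0 < f x) {T : ℝ} (hT : 0 < T) :
    0 < normalizer β f T :=
  mul_pos hT (inv_pos.2 (hf_pos _ (Real.rpow_pos_of_pos hT _)))

lemma psiT_nonneg (hψ_nonneg : ∀ z : ℝ, 0 ≤ ψ z) (hf_pos : ∀ x > (0:ℝ), 0 < f x) {T : ℝ}
    (hT : 0 < T) (z : ℝ) : 0 ≤ psiT β ψ f T z :=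
  mul_nonneg (normalizer_pos hf_pos hT).le (hψ_nonneg _)

lemma psiT_pos (hψ_pos : ∀ z : ℝ, z ≠ 0 → 0 < ψ z) (hf_pos : ∀ x > (0:ℝ), 0 < f x) {T z : ℝ}
    (hT : 0 < T) (hz : z ≠ 0) : 0 < psiT β ψ f T z :=
  mul_pos (normalizer_pos hf_pos hT) (hψ_pos _ (mul_ne_zero hz (Real.rpow_pos_of_pos hT _).ne'))

lemma psiT_abs (hψ_even : ∀ z : ℝ, ψ (-z) = ψ z) (T z : ℝ) :
    psiT β ψ f T |z| = psiT β ψ f T z := by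
  rcases abs_choice z with h | h <;> rw [h]
  simp only [psiT_eq_normalizer_mul, neg_mul, hψ_even]

lemma psiT_rpow_mul_mul (hβ : β ≠ 0) {l S : ℝ} (hl : 0 < l) (hS : 0 < S) (z : ℝ) :
    psiT β ψ f (l ^ β * S) (l * z) * normalizer β f S =
      normalizer β f (l ^ β * S) * psiT β ψ f S z := by
  have harg : l * z * (l ^ β * S) ^ (-(1/β)) = z * S ^ (-(1/β)) := by
    rw [Real.mul_rpow (by positivity) hS.le, ← Real.rpow_mul hl.le, mul_neg,
      mul_one_div_cancel hβ, Real.rpow_neg_one]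
    field_simp
  rw [psiT_eq_normalizer_mul, psiT_eq_normalizer_mul, harg]
  ring

lemma psiT_mul_psiT_eq (hβ : β ≠ 0) (hf_pos : ∀ x > (0:ℝ), 0 < f x) {l S : ℝ} (hl : 0 < l)
    (hS : 0 < S) (z : ℝ) :
    psiT β ψ f (l ^ β * S) l * psiT β ψ f S z =
      psiT β ψ f (l ^ β * S) (l * z) * psiT β ψ f S 1 := by
  have h₁ := psiT_rpow_mul_mul (ψ := ψ) (f := f) hβ hl hS 1
  have h₂ := psiT_rpow_mul_mul (ψ := ψ) (f := f) hβ hl hS z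
  rw [mul_one] at h₁
  refine mul_right_cancel₀ (normalizer_pos (β := β) hf_pos hS).ne' ?_
  linear_combination psiT β ψ f S z * h₁ - psiT β ψ f S 1 * h₂

lemma psiT_rpow_neg (hψ_nonneg : ∀ z : ℝ, 0 ≤ ψ z) (hf_pos : ∀ x > (0:ℝ), 0 < f x) {T : ℝ}
    (hT : 0 < T) (κ w : ℝ) :
    psiT β ψ f T w ^ (-κ) = normalizer β f T ^ (-κ) * ψ (w * T ^ (-(1/β))) ^ (-κ) :=
  Real.mul_rpow (normalizer_pos hf_pos hT).le (hψ_nonneg _)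

lemma integrableOn_Ioi_psiT_rpow_neg (hψ_nonneg : ∀ z : ℝ, 0 ≤ ψ z)
    (hf_pos : ∀ x > (0:ℝ), 0 < f x) {T W κ : ℝ} (hT : 0 < T)
    (h : IntegrableOn (fun v => ψ v ^ (-κ)) (Ioi (W * T ^ (-(1/β))))) :
    IntegrableOn (fun w => psiT β ψ f T w ^ (-κ)) (Ioi W) := by
  simp_rw [psiT_rpow_neg hψ_nonneg hf_pos hT]
  exact ((integrableOn_Ioi_comp_mul_right_iff (fun v => ψ v ^ (-κ)) W
    (Real.rpow_pos_of_pos hT _)).2 h).const_mul _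

lemma setIntegral_Ioi_psiT_rpow_neg (hψ_nonneg : ∀ z : ℝ, 0 ≤ ψ z)
    (hf_pos : ∀ x > (0:ℝ), 0 < f x) {T : ℝ} (hT : 0 < T) (W κ : ℝ) :
    ∫ w in Ioi W, psiT β ψ f T w ^ (-κ) =
      normalizer β f T ^ (-κ) * T ^ (1/β) * ∫ v in Ioi (W * T ^ (-(1/β))), ψ v ^ (-κ) := by
  simp_rw [psiT_rpow_neg hψ_nonneg hf_pos hT]
  rw [integral_const_mul, integral_comp_mul_right_Ioi (fun v => ψ v ^ (-κ)) W
    (Real.rpow_pos_of_pos hT _), smul_eq_mul, Real.rpow_neg hT.le, inv_inv, mul_assoc]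

end Rescaling

lemma exists_mem_notMem_and_sub_notMem {A t₁ t₂ : Set ℝ}
    (h : volume t₁ + volume t₂ < volume A) (s : ℝ) : ∃ x ∈ A, x ∉ t₁ ∧ x - s ∉ t₂ := by
  by_contra! hA
  have hsub : A ⊆ t₁ ∪ (fun x => x + -s) ⁻¹' t₂ := fun x hx =>
    (em (x ∈ t₁)).imp id fun hx₁ => by simpa [sub_eq_add_neg] using hA x hx hx₁
  have := (measure_mono (μ := volume) hsub).trans (measure_union_le _ _)
  rw [measure_preimage_add_right] at this
  exact this.not_gt h

lemma half_le_of_mul_eq_mul {a b c d X : ℝ} (hX : 1 ≤ X) (ha : 0 ≤ a) (hb : b < X + 1/10)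
    (hc : X - 1/10 < c) (hd : 9/10 < d) (h : a * b = c * d) : 1/2 ≤ a := by
  by_contra! ha'
  nlinarith [mul_le_mul_of_nonneg_left hb.le ha,
    mul_le_mul_of_nonneg_left hc.le (by linarith : 0 ≤ d),
    mul_le_mul_of_nonneg_right ha'.le (by linarith : 0 ≤ X + 1/10),
    mul_le_mul_of_nonneg_left hd.le (by linarith : 0 ≤ X - 1/10)]

section UniformLowerBound

variable {β : ℝ} {ψ f : ℝ → ℝ}

lemma tendsto_psiT_exp
    (hstable : ∀ z : ℝ, z ≠ 0 →
      Tendsto (fun T : ℝ => psiT β ψ f T z) atTop (𝓝 (|z| ^ β))) (x : ℝ) :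
    Tendsto (fun T => psiT β ψ f T (Real.exp x)) atTop (𝓝 (Real.exp (β * x))) := by
  have h := hstable _ (Real.exp_pos x).ne'
  rwa [abs_of_pos (Real.exp_pos x), ← Real.exp_mul, mul_comm] at h

lemma exists_tendstoUniformlyOn_psiT_exp (hψ_meas : Measurable ψ)
    (hstable : ∀ z : ℝ, z ≠ 0 →
      Tendsto (fun T : ℝ => psiT β ψ f T z) atTop (𝓝 (|z| ^ β)))
    {R : ℕ → ℝ} (hR : Tendsto R atTop atTop) (a b : ℝ) {ε : ℝ} (hε : 0 < ε) :
    ∃ t, volume t ≤ ENNReal.ofReal ε ∧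
      TendstoUniformlyOn (fun n x => psiT β ψ f (R n) (Real.exp x))
        (fun x => Real.exp (β * x)) atTop (Icc a b \ t) := by
  have hmeas : ∀ T, StronglyMeasurable fun x => psiT β ψ f T (Real.exp x) := fun T => by
    unfold psiT; fun_prop
  obtain ⟨t, -, -, ht, hu⟩ := tendstoUniformlyOn_of_ae_tendsto (fun n => hmeas (R n))
    (by fun_prop : Measurable fun x => Real.exp (β * x)).stronglyMeasurable measurableSet_Icc
    (measure_Icc_lt_top (μ := volume)).ne
    (.of_forall fun x _ => (tendsto_psiT_exp hstable x).comp hR) hε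
  exact ⟨t, ht, hu⟩

/-- Egorov's theorem makes `x ↦ ψ_T(e^x)` converge uniformly off a small set, and
`psiT_mul_psiT_eq` transfers the resulting bound from a good point `e^x` to any `z ∈ [1, 2]`. -/
lemma eventually_half_le_psiT_of_tendsto (hβ : 0 < β) (hψ_meas : Measurable ψ)
    (hψ_nonneg : ∀ z : ℝ, 0 ≤ ψ z) (hf_pos : ∀ x > (0:ℝ), 0 < f x)
    (hstable : ∀ z : ℝ, z ≠ 0 →
      Tendsto (fun T : ℝ => psiT β ψ f T z) atTop (𝓝 (|z| ^ β)))
    {T z : ℕ → ℝ} (hT : Tendsto T atTop atTop) (hz : ∀ n, z n ∈ Icc (1:ℝ) 2) :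
    ∀ᶠ n in atTop, 1/2 ≤ psiT β ψ f (T n) (z n) := by
  have hzpos : ∀ n, 0 < z n := fun n => one_pos.trans_le (hz n).1
  set Y : ℕ → ℝ := fun n => T n / z n ^ β
  have hTY : ∀ n, z n ^ β * Y n = T n := fun n =>
    mul_div_cancel₀ _ (Real.rpow_pos_of_pos (hzpos n) _).ne'
  have hYtop : Tendsto Y atTop atTop := by
    refine tendsto_atTop_mono' atTop ?_ (hT.atTop_div_const (by positivity : (0:ℝ) < 2 ^ β))
    filter_upwards [hT.eventually_ge_atTop 0] with n hn
    exact div_le_div_of_nonneg_left hn (Real.rpow_pos_of_pos (hzpos n) _)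
      (Real.rpow_le_rpow (hzpos n).le (hz n).2 hβ.le)
  obtain ⟨t₁, ht₁, hu₁⟩ := exists_tendstoUniformlyOn_psiT_exp hψ_meas hstable hT 0 3 one_pos
  obtain ⟨t₂, ht₂, hu₂⟩ := exists_tendstoUniformlyOn_psiT_exp hψ_meas hstable hYtop (-1) 3 one_pos
  have hY1 : Tendsto (fun n => psiT β ψ f (Y n) 1) atTop (𝓝 1) := by
    simpa [Function.comp_def] using (hstable 1 one_ne_zero).comp hYtop
  have hvol : volume t₁ + volume t₂ < volume (Icc (0:ℝ) 3) := by
    rw [Real.volume_Icc]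
    calc volume t₁ + volume t₂ ≤ ENNReal.ofReal 1 + ENNReal.ofReal 1 := add_le_add ht₁ ht₂
    _ < ENNReal.ofReal (3 - 0) := by
      rw [← ENNReal.ofReal_add zero_le_one zero_le_one, ENNReal.ofReal_lt_ofReal_iff] <;> norm_num
  rw [Metric.tendstoUniformlyOn_iff] at hu₁ hu₂
  filter_upwards [hu₁ (1/10) (by norm_num), hu₂ (1/10) (by norm_num),
    hY1.eventually (lt_mem_nhds (by norm_num : (9/10:ℝ) < 1)), hT.eventually_gt_atTop 0]
    with n hn₁ hn₂ hn₃ hTn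
  set s := Real.log (z n)
  obtain ⟨x, hx, hx₁, hx₂⟩ := exists_mem_notMem_and_sub_notMem hvol s
  have hs0 : 0 ≤ s := Real.log_nonneg (hz n).1
  have hs1 : s ≤ 1 := (Real.log_le_sub_one_of_pos (hzpos n)).trans (by linarith [(hz n).2])
  have hzx : z n * Real.exp (x - s) = Real.exp x := by
    rw [Real.exp_sub, Real.exp_log (hzpos n), mul_div_cancel₀ _ (hzpos n).ne']
  have hident := psiT_mul_psiT_eq (ψ := ψ) (S := Y n) hβ.ne' hf_pos (hzpos n)
    (div_pos hTn (Real.rpow_pos_of_pos (hzpos n) β)) (Real.exp (x - s))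
  rw [hTY, hzx] at hident
  have h₁ := hn₁ x ⟨hx, hx₁⟩
  have h₂ := hn₂ (x - s) ⟨⟨by linarith [hx.1], by linarith [hx.2]⟩, hx₂⟩
  rw [Real.dist_eq, abs_lt] at h₁ h₂
  have hX : Real.exp (β * (x - s)) ≤ Real.exp (β * x) := Real.exp_le_exp.2 (by nlinarith)
  have hX1 : 1 ≤ Real.exp (β * x) := Real.one_le_exp (by nlinarith [hx.1])
  exact half_le_of_mul_eq_mul hX1 (psiT_nonneg hψ_nonneg hf_pos hTn (z n)) (by linarith)
    (by linarith) hn₃ hident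

theorem eventually_forall_mem_Icc_half_le_psiT (hβ : 0 < β) (hψ_meas : Measurable ψ)
    (hψ_nonneg : ∀ z : ℝ, 0 ≤ ψ z) (hf_pos : ∀ x > (0:ℝ), 0 < f x)
    (hstable : ∀ z : ℝ, z ≠ 0 →
      Tendsto (fun T : ℝ => psiT β ψ f T z) atTop (𝓝 (|z| ^ β))) :
    ∀ᶠ T in atTop, ∀ z ∈ Icc (1:ℝ) 2, 1/2 ≤ psiT β ψ f T z := by
  rw [eventually_atTop]
  by_contra! h
  choose T hT z hz hlt using fun n : ℕ => h n
  obtain ⟨n, hn⟩ := (eventually_half_le_psiT_of_tendsto hβ hψ_meas hψ_nonneg hf_pos hstable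
    (tendsto_atTop_mono hT tendsto_natCast_atTop_atTop) hz).exists
  exact (hlt n).not_ge hn

end UniformLowerBound

lemma pow_mul_le_of_forall_mul_le {g : ℝ → ℝ} {a b S₀ : ℝ} (ha : 0 ≤ a) (hb : 1 ≤ b)
    (hS₀ : 0 ≤ S₀) (h : ∀ S ≥ S₀, a * g S ≤ g (b * S)) (k : ℕ) {S : ℝ} (hS : S₀ ≤ S) :
    a ^ k * g S ≤ g (b ^ k * S) := by
  induction k generalizing S with
  | zero => simp
  | succ k ih =>
    calc a ^ (k + 1) * g S = a ^ k * (a * g S) := by ring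
    _ ≤ a ^ k * g (b * S) := mul_le_mul_of_nonneg_left (h S hS) (pow_nonneg ha k)
    _ ≤ g (b ^ k * (b * S)) := ih (hS.trans (le_mul_of_one_le_left (hS₀.trans hS) hb))
    _ = g (b ^ (k + 1) * S) := by rw [pow_succ, mul_assoc]

lemma div_rpow_mul_rpow_neg {T T₀ : ℝ} (hT : 0 < T) (hT₀ : 0 < T₀) (r : ℝ) :
    (T / T₀) ^ r * T ^ (-r) = T₀ ^ (-r) := by
  rw [Real.div_rpow hT.le hT₀.le, Real.rpow_neg hT.le, Real.rpow_neg hT₀.le]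
  field_simp

lemma rpow_neg_mul_rpow_le {D c T κ ρ β : ℝ} (hc : 0 < c) (hT : 1 ≤ T) (hβ : 0 < β)
    (hκ : 0 ≤ κ) (hρκ : 1 ≤ ρ * κ) (hD : c * T ^ (ρ / β) ≤ D) :
    D ^ (-κ) * T ^ (1/β) ≤ c ^ (-κ) := by
  have hT0 : 0 < T := one_pos.trans_le hT
  calc D ^ (-κ) * T ^ (1/β) ≤ (c * T ^ (ρ / β)) ^ (-κ) * T ^ (1/β) :=
        mul_le_mul_of_nonneg_right
          (Real.rpow_le_rpow_of_nonpos (by positivity) hD (neg_nonpos.2 hκ)) (by positivity)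
  _ = c ^ (-κ) * T ^ ((1 - ρ * κ) / β) := by
        rw [Real.mul_rpow hc.le (by positivity), ← Real.rpow_mul hT0.le, mul_assoc,
          ← Real.rpow_add hT0]
        congr 2
        ring
  _ ≤ c ^ (-κ) := mul_le_of_le_one_right (by positivity)
        (Real.rpow_le_one_of_one_le_of_nonpos hT
          (div_nonpos_of_nonpos_of_nonneg (show 1 - ρ * κ ≤ 0 by linarith) hβ.le))

section Doubling

variable {β : ℝ} {ψ f : ℝ → ℝ}

lemma eventually_rpow_mul_normalizer_le (hβ : 0 < β) (hψ_pos : ∀ z : ℝ, z ≠ 0 → 0 < ψ z)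
    (hf_pos : ∀ x > (0:ℝ), 0 < f x)
    (hstable : ∀ z : ℝ, z ≠ 0 →
      Tendsto (fun T : ℝ => psiT β ψ f T z) atTop (𝓝 (|z| ^ β))) {ρ : ℝ} (hρ : ρ < β) :
    ∀ᶠ S in atTop, 2 ^ ρ * normalizer β f S ≤ normalizer β f (2 ^ β * S) := by
  have h₁ : Tendsto (fun S => psiT β ψ f S 1) atTop (𝓝 1) := by
    simpa using hstable 1 one_ne_zero
  have h₂ : Tendsto (fun S => psiT β ψ f (2 ^ β * S) 2) atTop (𝓝 (2 ^ β)) := by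
    simpa [Function.comp_def] using
      (hstable 2 two_ne_zero).comp (tendsto_id.const_mul_atTop (by positivity : (0:ℝ) < 2 ^ β))
  have hlt : (2:ℝ) ^ ρ * 1 < 2 ^ β := by
    rw [mul_one]; exact Real.rpow_lt_rpow_of_exponent_lt one_lt_two hρ
  filter_upwards [(h₁.const_mul _).eventually_lt h₂ hlt, eventually_gt_atTop 0] with S hS hS0
  have hscale := psiT_rpow_mul_mul (ψ := ψ) (f := f) hβ.ne' two_pos hS0 1
  rw [mul_one] at hscale
  have hp := psiT_pos (β := β) (f := f) hψ_pos hf_pos hS0 one_ne_zero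
  refine le_of_mul_le_mul_right ?_ hp
  calc 2 ^ ρ * normalizer β f S * psiT β ψ f S 1
      = 2 ^ ρ * psiT β ψ f S 1 * normalizer β f S := by ring
  _ ≤ psiT β ψ f (2 ^ β * S) 2 * normalizer β f S :=
      mul_le_mul_of_nonneg_right hS.le (normalizer_pos hf_pos hS0).le
  _ = normalizer β f (2 ^ β * S) * psiT β ψ f S 1 := hscale

/-- A Potter-type lower bound: write `w = 2^k z` with `z ∈ [1, 2]` and compare `ψ_T(w)` with
`ψ_S(z)`, `T = 2^{kβ} S`, gaining a factor `2^ρ` for each doubling. -/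
lemma le_psiT_of_doubling (hβ : 0 < β) (hf_pos : ∀ x > (0:ℝ), 0 < f x) {ρ T₀ : ℝ}
    (hρ : 0 ≤ ρ) (hT₀ : 0 < T₀)
    (hdouble : ∀ S ≥ T₀, 2 ^ ρ * normalizer β f S ≤ normalizer β f (2 ^ β * S))
    (hhalf : ∀ S ≥ T₀, ∀ z ∈ Icc (1:ℝ) 2, 1/2 ≤ psiT β ψ f S z)
    {T w : ℝ} (hw : 1 ≤ w) (hwT : T₀ * w ^ β ≤ T) :
    2⁻¹ * 2 ^ (-ρ) * w ^ ρ ≤ psiT β ψ f T w := by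
  have hT0 : 0 < T := (mul_pos hT₀ (by positivity)).trans_le hwT
  obtain ⟨k, hkw, hwk⟩ := exists_nat_pow_near hw one_lt_two
  set l : ℝ := 2 ^ k
  have hl : 0 < l := by positivity
  have hlβ : l ^ β = (2 ^ β) ^ k := (Real.rpow_pow_comm zero_le_two β k).symm
  set S := T / l ^ β
  have hS : T₀ ≤ S := by
    rw [le_div_iff₀ (by positivity)]
    exact (mul_le_mul_of_nonneg_left (Real.rpow_le_rpow hl.le hkw hβ.le) hT₀.le).trans hwT
  have hS0 : 0 < S := hT₀.trans_le hS
  have hT : l ^ β * S = T := mul_div_cancel₀ _ (by positivity)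
  have hscale := psiT_rpow_mul_mul (ψ := ψ) (f := f) hβ.ne' hl hS0 (w / l)
  rw [hT, mul_div_cancel₀ _ hl.ne'] at hscale
  have hD : (2 ^ ρ) ^ k * normalizer β f S ≤ normalizer β f T := by
    rw [← hT, hlβ]
    exact pow_mul_le_of_forall_mul_le (by positivity) (Real.one_le_rpow one_le_two hβ.le)
      hT₀.le hdouble k hS
  have hz : w / l ∈ Icc (1:ℝ) 2 :=
    ⟨(one_le_div hl).2 hkw, (div_le_iff₀ hl).2 (by rw [pow_succ] at hwk; linarith)⟩
  have hpow : 2⁻¹ * 2 ^ (-ρ) * w ^ ρ ≤ (2 ^ ρ) ^ k * (1/2) := by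
    calc 2⁻¹ * 2 ^ (-ρ) * w ^ ρ ≤ 2⁻¹ * 2 ^ (-ρ) * ((2:ℝ) ^ (k + 1)) ^ ρ := by
          gcongr
    _ = (2 ^ ρ) ^ k * (1/2) := by
          rw [← Real.rpow_pow_comm zero_le_two, pow_succ, Real.rpow_neg zero_le_two]
          field_simp
  refine hpow.trans (le_of_mul_le_mul_right ?_ (normalizer_pos (β := β) hf_pos hS0))
  calc (2 ^ ρ) ^ k * (1/2) * normalizer β f S = ((2 ^ ρ) ^ k * normalizer β f S) * (1/2) := by ring
  _ ≤ normalizer β f T * psiT β ψ f S (w / l) :=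
        mul_le_mul hD (hhalf S hS _ hz) (by norm_num) (normalizer_pos hf_pos hT0).le
  _ = psiT β ψ f T w * normalizer β f S := hscale.symm

lemma exists_mul_rpow_le_normalizer (hβ : 0 < β) (hψ_pos : ∀ z : ℝ, z ≠ 0 → 0 < ψ z)
    (hf_pos : ∀ x > (0:ℝ), 0 < f x) {ρ T₀ : ℝ} (hρ : 0 ≤ ρ) (hT₀ : 0 < T₀)
    (hdouble : ∀ S ≥ T₀, 2 ^ ρ * normalizer β f S ≤ normalizer β f (2 ^ β * S))
    (hhalf : ∀ S ≥ T₀, ∀ z ∈ Icc (1:ℝ) 2, 1/2 ≤ psiT β ψ f S z) :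
    ∃ c > 0, ∀ T ≥ T₀, c * T ^ (ρ / β) ≤ normalizer β f T := by
  have ha : 0 < ψ (T₀ ^ (-(1/β))) := hψ_pos _ (Real.rpow_pos_of_pos hT₀ _).ne'
  refine ⟨2⁻¹ * 2 ^ (-ρ) * T₀ ^ (-(ρ / β)) / ψ (T₀ ^ (-(1/β))), by positivity, fun T hT => ?_⟩
  have hT0 : 0 < T := hT₀.trans_le hT
  have hw : 1 ≤ (T / T₀) ^ (1/β) := Real.one_le_rpow ((one_le_div hT₀).2 hT) (by positivity)
  have hwβ : T₀ * ((T / T₀) ^ (1/β)) ^ β = T := by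
    rw [← Real.rpow_mul (by positivity), one_div_mul_cancel hβ.ne', Real.rpow_one]
    field_simp
  have h := le_psiT_of_doubling hβ hf_pos hρ hT₀ hdouble hhalf hw hwβ.le
  rw [psiT_eq_normalizer_mul, div_rpow_mul_rpow_neg hT0 hT₀, ← Real.rpow_mul (by positivity),
    Real.div_rpow hT0.le hT₀.le, one_div_mul_eq_div] at h
  rw [div_mul_eq_mul_div, div_le_iff₀ ha, Real.rpow_neg hT₀.le (ρ / β)]
  calc 2⁻¹ * 2 ^ (-ρ) * (T₀ ^ (ρ / β))⁻¹ * T ^ (ρ / β)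
      = 2⁻¹ * 2 ^ (-ρ) * (T ^ (ρ / β) / T₀ ^ (ρ / β)) := by ring
  _ ≤ _ := h

theorem exists_potter_bounds (hβ : 0 < β) (hψ_meas : Measurable ψ)
    (hψ_nonneg : ∀ z : ℝ, 0 ≤ ψ z) (hψ_pos : ∀ z : ℝ, z ≠ 0 → 0 < ψ z)
    (hf_pos : ∀ x > (0:ℝ), 0 < f x)
    (hstable : ∀ z : ℝ, z ≠ 0 →
      Tendsto (fun T : ℝ => psiT β ψ f T z) atTop (𝓝 (|z| ^ β))) {ρ : ℝ} (hρ : 0 ≤ ρ)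
    (hρβ : ρ < β) :
    ∃ T₀ ≥ 1, ∃ c > 0, (∀ T ≥ T₀, c * T ^ (ρ / β) ≤ normalizer β f T) ∧
      ∀ T w, 1 ≤ w → T₀ * w ^ β ≤ T → 2⁻¹ * 2 ^ (-ρ) * w ^ ρ ≤ psiT β ψ f T w := by
  obtain ⟨T₀, hT₀⟩ := ((eventually_rpow_mul_normalizer_le hβ hψ_pos hf_pos hstable hρβ).and
    ((eventually_forall_mem_Icc_half_le_psiT hβ hψ_meas hψ_nonneg hf_pos hstable).and
      (eventually_ge_atTop 1))).exists_forall_of_atTop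
  have hT₀1 : 1 ≤ T₀ := (hT₀ T₀ le_rfl).2.2
  have hT₀0 : 0 < T₀ := one_pos.trans_le hT₀1
  have hdouble := fun S hS => (hT₀ S hS).1
  have hhalf := fun S hS => (hT₀ S hS).2.1
  obtain ⟨c, hc, hD⟩ := exists_mul_rpow_le_normalizer hβ hψ_pos hf_pos hρ hT₀0 hdouble hhalf
  exact ⟨T₀, hT₀1, c, hc, hD, fun T w hw hwT =>
    le_psiT_of_doubling hβ hf_pos hρ hT₀0 hdouble hhalf hw hwT⟩

end Doubling

lemma exp_neg_mul_le_indicator {g : ℝ → ℝ} {u c κ ρ W w : ℝ} (hu : 0 < u) (hc : 0 < c)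
    (hκ0 : 0 ≤ κ) (hκ1 : κ ≤ 1) (hw : 0 < w) (hgw : 0 < g w)
    (hlow : 1 ≤ w → w ≤ W → c * w ^ ρ ≤ g w) :
    Real.exp (-(u * g w)) ≤ (Ioc 0 1).indicator (fun _ => 1) w +
      (Ioi 1).indicator (fun w => (u * c) ^ (-κ) * w ^ (-(ρ * κ))) w +
      (Ioi W).indicator (fun w => u ^ (-κ) * g w ^ (-κ)) w := by
  have hugw : 0 < u * g w := mul_pos hu hgw
  have h₁ : 0 ≤ (Ioc (0:ℝ) 1).indicator (fun _ => (1:ℝ)) w :=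
    indicator_apply_nonneg fun _ => zero_le_one
  have h₂ : 0 ≤ (Ioi (1:ℝ)).indicator (fun w => (u * c) ^ (-κ) * w ^ (-(ρ * κ))) w :=
    indicator_apply_nonneg fun _ => by positivity
  have h₃ : 0 ≤ (Ioi W).indicator (fun w => u ^ (-κ) * g w ^ (-κ)) w :=
    indicator_apply_nonneg fun _ => by positivity
  rcases le_or_gt w 1 with hw1 | hw1
  · rw [indicator_of_mem (show w ∈ Ioc 0 1 from ⟨hw, hw1⟩)]
    linarith [Real.exp_le_one_iff.2 (neg_nonpos.2 hugw.le)]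
  have hexp := exp_neg_le_rpow_neg hκ0 hκ1 hugw
  rcases le_or_gt w W with hwW | hwW
  · have hpow : (u * g w) ^ (-κ) ≤ (u * c) ^ (-κ) * w ^ (-(ρ * κ)) := by
      rw [neg_mul_eq_mul_neg, Real.rpow_mul hw.le, ← Real.mul_rpow (by positivity) (by positivity),
        mul_assoc]
      exact Real.rpow_le_rpow_of_nonpos (by positivity)
        (mul_le_mul_of_nonneg_left (hlow hw1.le hwW) hu.le) (neg_nonpos.2 hκ0)
    rw [indicator_of_mem (show w ∈ Ioi 1 from hw1)]
    linarith
  · rw [indicator_of_mem (show w ∈ Ioi W from hwW), ← Real.mul_rpow hu.le hgw.le]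
    linarith

lemma setIntegral_Ioi_exp_neg_mul_le {g : ℝ → ℝ} {u c κ ρ W : ℝ} (hu : 0 < u) (hc : 0 < c)
    (hκ0 : 0 ≤ κ) (hκ1 : κ ≤ 1) (hρκ : 1 < ρ * κ) (hW : 0 ≤ W) (hg : ∀ w > 0, 0 < g w)
    (hlow : ∀ w, 1 ≤ w → w ≤ W → c * w ^ ρ ≤ g w)
    (htail : IntegrableOn (fun w => g w ^ (-κ)) (Ioi W)) :
    ∫ w in Ioi 0, Real.exp (-(u * g w)) ≤
      1 + (u * c) ^ (-κ) / (ρ * κ - 1) + u ^ (-κ) * ∫ w in Ioi W, g w ^ (-κ) := by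
  set G₁ := (Ioc (0:ℝ) 1).indicator fun _ => (1:ℝ)
  set G₂ := (Ioi (1:ℝ)).indicator fun w => (u * c) ^ (-κ) * w ^ (-(ρ * κ))
  set G₃ := (Ioi W).indicator fun w => u ^ (-κ) * g w ^ (-κ)
  have hρκ' : -(ρ * κ) < -1 := by linarith
  have hG₁ : Integrable G₁ := (integrable_indicator_iff measurableSet_Ioc).2
    (integrableOn_const (measure_Ioc_lt_top (μ := volume)).ne)
  have hG₂ : Integrable G₂ := (integrable_indicator_iff measurableSet_Ioi).2
    ((integrableOn_Ioi_rpow_of_lt hρκ' one_pos).const_mul _)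
  have hG₃ : Integrable G₃ := (integrable_indicator_iff measurableSet_Ioi).2 (htail.const_mul _)
  have hG₁₂ : Integrable fun w => G₁ w + G₂ w := hG₁.add hG₂
  have hG : Integrable fun w => G₁ w + G₂ w + G₃ w := hG₁₂.add hG₃
  have hG_nonneg : ∀ w, 0 ≤ G₁ w + G₂ w + G₃ w := fun w =>
    add_nonneg (add_nonneg (indicator_apply_nonneg fun _ => zero_le_one)
      (indicator_apply_nonneg fun (hw : 1 < w) => by have := zero_lt_one.trans hw; positivity))
      (indicator_apply_nonneg fun (hw : W < w) => by have := hg w (hW.trans_lt hw); positivity)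
  calc ∫ w in Ioi 0, Real.exp (-(u * g w)) ≤ ∫ w in Ioi 0, (G₁ w + G₂ w + G₃ w) :=
        integral_mono_of_nonneg (.of_forall fun _ => (Real.exp_pos _).le) hG.integrableOn
          (ae_restrict_of_forall_mem measurableSet_Ioi fun w (hw : 0 < w) =>
            exp_neg_mul_le_indicator hu hc hκ0 hκ1 hw (hg w hw) (hlow w))
  _ ≤ ∫ w, (G₁ w + G₂ w + G₃ w) := setIntegral_le_integral hG (.of_forall hG_nonneg)
  _ = 1 + (u * c) ^ (-κ) / (ρ * κ - 1) + u ^ (-κ) * ∫ w in Ioi W, g w ^ (-κ) := by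
        rw [integral_add hG₁₂ hG₃, integral_add hG₁ hG₂, integral_indicator measurableSet_Ioc,
          integral_indicator measurableSet_Ioi, integral_indicator measurableSet_Ioi,
          setIntegral_const, Real.volume_real_Ioc, integral_const_mul, integral_const_mul,
          integral_Ioi_rpow_of_lt hρκ' one_pos, Real.one_rpow,
          show -(ρ * κ) + 1 = -(ρ * κ - 1) by ring, neg_div_neg_eq, mul_one_div]
        norm_num

section MainEstimate

variable {β : ℝ} {ψ f : ℝ → ℝ}

theorem exists_integral_exp_neg_psiT_le (hβ : 0 < β) (hψ_meas : Measurable ψ)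
    (hψ_even : ∀ z : ℝ, ψ (-z) = ψ z) (hψ_nonneg : ∀ z : ℝ, 0 ≤ ψ z)
    (hψ_pos : ∀ z : ℝ, z ≠ 0 → 0 < ψ z) (hf_pos : ∀ x > (0:ℝ), 0 < f x)
    (hstable : ∀ z : ℝ, z ≠ 0 →
      Tendsto (fun T : ℝ => psiT β ψ f T z) atTop (𝓝 (|z| ^ β)))
    {κ ρ : ℝ} (hκ0 : 0 ≤ κ) (hκ1 : κ ≤ 1) (hρβ : ρ < β) (hρκ : 1 < ρ * κ)
    (htail : ∀ a > 0, IntegrableOn (fun w => ψ w ^ (-κ)) (Ioi a)) :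
    ∃ C > 0, ∃ T₀ ≥ 1, ∀ T ≥ T₀, ∀ u ∈ Ioc (0:ℝ) 1,
      ∫ w, Real.exp (-(u * psiT β ψ f T w)) ≤ C * u ^ (-κ) := by
  obtain ⟨T₀, hT₀1, c, hc, hD, hpotter⟩ := exists_potter_bounds hβ hψ_meas hψ_nonneg hψ_pos
    hf_pos hstable (by nlinarith : 0 ≤ ρ) hρβ
  have hT₀0 : 0 < T₀ := one_pos.trans_le hT₀1
  set a := T₀ ^ (-(1/β))
  set M := ∫ v in Ioi a, ψ v ^ (-κ)
  have hM : 0 ≤ M :=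
    setIntegral_nonneg measurableSet_Ioi fun v _ => Real.rpow_nonneg (hψ_nonneg v) _
  set c' : ℝ := 2⁻¹ * 2 ^ (-ρ)
  refine ⟨2 * (1 + c' ^ (-κ) / (ρ * κ - 1) + c ^ (-κ) * M), ?_, T₀, hT₀1, fun T hT u hu => ?_⟩
  · have : 0 < ρ * κ - 1 := by linarith
    positivity
  have hT0 : 0 < T := hT₀0.trans_le hT
  set W := (T / T₀) ^ (1/β)
  have hWa : W * T ^ (-(1/β)) = a := div_rpow_mul_rpow_neg hT0 hT₀0 _
  have hlow : ∀ w, 1 ≤ w → w ≤ W → c' * w ^ ρ ≤ psiT β ψ f T w := fun w hw hwW => by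
    refine hpotter T w hw ?_
    calc T₀ * w ^ β ≤ T₀ * W ^ β := by gcongr
    _ = T := by
      rw [← Real.rpow_mul (by positivity), one_div_mul_cancel hβ.ne', Real.rpow_one]
      field_simp
  have hest := setIntegral_Ioi_exp_neg_mul_le hu.1 (by positivity : 0 < c') hκ0 hκ1 hρκ
    (by positivity) (fun w hw => psiT_pos hψ_pos hf_pos hT0 hw.ne') hlow
    (integrableOn_Ioi_psiT_rpow_neg hψ_nonneg hf_pos hT0 (hWa ▸ htail a (by positivity)))
  rw [setIntegral_Ioi_psiT_rpow_neg hψ_nonneg hf_pos hT0, hWa] at hest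
  have hDT := rpow_neg_mul_rpow_le hc (hT₀1.trans hT) hβ hκ0 hρκ.le (hD T hT)
  have hu1 : 1 ≤ u ^ (-κ) := Real.one_le_rpow_of_pos_of_le_one_of_nonpos hu.1 hu.2 (by linarith)
  calc ∫ w, Real.exp (-(u * psiT β ψ f T w))
      = 2 * ∫ w in Ioi 0, Real.exp (-(u * psiT β ψ f T w)) := by
        simpa only [psiT_abs hψ_even] using
          integral_comp_abs (f := fun w => Real.exp (-(u * psiT β ψ f T w)))
  _ ≤ 2 * (1 + (u * c') ^ (-κ) / (ρ * κ - 1) +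
        u ^ (-κ) * (normalizer β f T ^ (-κ) * T ^ (1/β) * M)) := by gcongr
  _ ≤ 2 * (1 + c' ^ (-κ) / (ρ * κ - 1) + c ^ (-κ) * M) * u ^ (-κ) := by
        rw [Real.mul_rpow hu.1.le (by positivity), mul_div_assoc]
        have : 0 ≤ c' ^ (-κ) / (ρ * κ - 1) := by
          have : 0 < ρ * κ - 1 := by linarith
          positivity
        nlinarith [mul_le_mul_of_nonneg_left (mul_le_mul_of_nonneg_right hDT hM)
          (zero_le_one.trans hu1)]

end MainEstimate

lemma exists_exponents {β κ : ℝ} (hβ : 1 < β) (hκ : κ < 1) :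
    ∃ κ' ∈ Ioo (1/β) 1, κ ≤ κ' ∧ ∃ ρ < β, 1 < ρ * κ' := by
  have hβ0 : 0 < β := by linarith
  have hβinv : 1/β < 1 := (div_lt_one hβ0).2 hβ
  set κ' := max κ ((1/β + 1) / 2)
  have h₁ : 1/β < κ' := lt_max_of_lt_right (by linarith)
  have hκ'0 : 0 < κ' := (by positivity : (0:ℝ) < 1/β).trans h₁
  have h₂ : 1 < β * κ' := by rwa [div_lt_iff₀' hβ0] at h₁
  refine ⟨κ', ⟨h₁, max_lt hκ (by linarith)⟩, le_max_left _ _, (1/κ' + β) / 2, ?_, ?_⟩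
  · have : 1/κ' < β := by rw [div_lt_iff₀ hκ'0]; linarith
    linarith
  · field_simp
    linarith

lemma setIntegral_Ioc_rpow_neg {κ t : ℝ} (hκ : κ < 1) (ht : 0 ≤ t) :
    ∫ u in Ioc 0 t, u ^ (-κ) = t ^ (1 - κ) / (1 - κ) := by
  rw [← intervalIntegral.integral_of_le ht, integral_rpow (Or.inl (by linarith)),
    Real.zero_rpow (by linarith), sub_zero, neg_add_eq_sub]

/-- Under the standing context (`β ∈ (1,2)`, `ψ` measurable, even,
nonnegative, positive off `0`, stable normalization, `∫_1^∞ ψ⁻¹ < ∞`, `1/ψ` locally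
integrable on `(0,∞)`), assume in addition there exists `κ ∈ (0,1)` with
`∫_1^∞ ψ(w)^{−κ} dw < ∞`. Then there exist `δ ∈ (0, 1 − 1/β)`, `c₀ > 0` and `T₀ ≥ 1`
such that for all `T ≥ T₀` and all `t ∈ (0,1)`,
`∫_0^t ∫_ℝ e^{−u·ψ_T(w)} dw du ≤ c₀·t^δ`. -/
theorem stmt_6 (β : ℝ) (hβ : β ∈ Set.Ioo (1:ℝ) 2)
    (ψ f : ℝ → ℝ) (hψ_meas : Measurable ψ) (hψ_even : ∀ z : ℝ, ψ (-z) = ψ z)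
    (hψ_nonneg : ∀ z : ℝ, 0 ≤ ψ z) (hψ_pos : ∀ z : ℝ, z ≠ 0 → 0 < ψ z)
    (hf_pos : ∀ x > (0:ℝ), 0 < f x)
    (hstable : ∀ z : ℝ, z ≠ 0 →
      Filter.Tendsto (fun T : ℝ => psiT β ψ f T z) Filter.atTop (nhds (|z| ^ β)))
    (hint : IntegrableOn (fun z : ℝ => (ψ z)⁻¹) (Set.Ioi 1) volume)
    (hloc : ∀ a b : ℝ, 0 < a → IntegrableOn (fun z : ℝ => (ψ z)⁻¹) (Set.Icc a b) volume)
    (κ : ℝ) (hκ : κ ∈ Set.Ioo (0:ℝ) 1)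
    (hκint : IntegrableOn (fun w : ℝ => (ψ w) ^ (-κ)) (Set.Ioi 1) volume) :
    ∃ δ ∈ Set.Ioo (0:ℝ) (1 - 1/β), ∃ c₀ > (0:ℝ), ∃ T₀ ≥ (1:ℝ), ∀ T ≥ T₀,
      ∀ t ∈ Set.Ioo (0:ℝ) 1,
        (∫ u in Set.Ioc (0:ℝ) t, ∫ w : ℝ, Real.exp (-(u * psiT β ψ f T w))) ≤ c₀ * t ^ δ := by
  have hβ0 : 0 < β := by linarith [hβ.1]
  obtain ⟨κ', ⟨hβκ', hκ'1⟩, hκκ', ρ, hρβ, hρκ'⟩ := exists_exponents hβ.1 hκ.2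
  have hκ'0 : 0 ≤ κ' := ((by positivity : (0:ℝ) ≤ 1/β).trans hβκ'.le)
  obtain ⟨C, hC, T₀, hT₀, hbound⟩ := exists_integral_exp_neg_psiT_le hβ0 hψ_meas hψ_even
    hψ_nonneg hψ_pos hf_pos hstable hκ'0 hκ'1.le hρβ hρκ' fun a ha =>
      integrableOn_rpow_neg_Ioi hψ_meas hψ_pos ha hκκ' hκ'0 hκ'1.le (hloc a 1 ha) hint hκint
  refine ⟨1 - κ', ⟨by linarith, by linarith⟩, C / (1 - κ'), div_pos hC (by linarith), T₀, hT₀,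
    fun T hT t ht => ?_⟩
  have hintegrable : IntegrableOn (fun u : ℝ => C * u ^ (-κ')) (Ioc 0 t) :=
    ((intervalIntegral.intervalIntegrable_rpow' (by linarith : -1 < -κ')).1).const_mul C
  calc (∫ u in Ioc 0 t, ∫ w, Real.exp (-(u * psiT β ψ f T w)))
      ≤ ∫ u in Ioc 0 t, C * u ^ (-κ') :=
        integral_mono_of_nonneg (.of_forall fun u => integral_nonneg fun w => (Real.exp_pos _).le)
          hintegrable ((ae_restrict_iff' measurableSet_Ioc).2 (.of_forall fun u hu =>
            hbound T hT u ⟨hu.1, hu.2.trans ht.2.le⟩))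
  _ = C / (1 - κ') * t ^ (1 - κ') := by
        rw [integral_const_mul, setIntegral_Ioc_rpow_neg hκ'1 ht.1.le]
        ring
end

section
/- Let α ∈ (1,2), β ∈ (1,2), and let L : (0,∞) → (0,∞) be measurable, slowly varying at infinity, and such that z ↦ z^{1−α}·L(z) is locally integrable on (0,∞). Then there exists a constant C > 0, depending only on α, such that for every r ∈ (0,1) there is T₀ ≥ 1 with ∫_{{0 < |z| ≤ r}} |z|^{1−α} · L(T^{1/(αβ)}·|z|) / L(T^{1/(αβ)}) dz ≤ C·r^{2−α} for all T ≥ T₀. -/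
/-!
After the substitution `u = a z` with `a = T^{1/(αβ)} → ∞`, the integral equals
`2 (a^{2-α} L(a))⁻¹ ∫₀^{ar} u^{1-α} L(u) du`. Split at a fixed `A`. The part over `[0, A]` is a
constant divided by `a^{2-α} L(a)`, which tends to infinity. On `[A, ar]` Potter's bound
`L(u) ≤ e^δ (ar/u)^δ L(ar)` with `δ = (2-α)/2` bounds the integral by `(e^δ/δ) r^{2-α} L(ar)/L(a)`,
and `L(ar)/L(a) → 1`. Potter's bound comes from the uniform convergence theorem for the additive
function `x ↦ log L(eˣ)`, which follows from Egorov's theorem.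
-/

open MeasureTheory Filter Set Real Topology

section UniformConvergence

variable {h : ℝ → ℝ}

theorem abs_sub_le_mul_add_one_of_forall_Icc {X ε : ℝ}
    (H : ∀ x ≥ X, ∀ u ∈ Icc (0 : ℝ) 1, |h (x + u) - h x| ≤ ε) :
    ∀ x ≥ X, ∀ s ≥ (0 : ℝ), |h (x + s) - h x| ≤ ε * (s + 1) := by
  have hε : 0 ≤ ε := (abs_nonneg _).trans (H X le_rfl 0 ⟨le_rfl, zero_le_one⟩)
  suffices ∀ n : ℕ, ∀ x ≥ X, ∀ s ∈ Icc (0 : ℝ) n, |h (x + s) - h x| ≤ ε * (s + 1) from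
    fun x hx s hs => this ⌈s⌉₊ x hx s ⟨hs, Nat.le_ceil s⟩
  intro n
  induction n with
  | zero =>
    rintro x - s ⟨hs0, hs⟩
    obtain rfl : s = 0 := le_antisymm (by simpa using hs) hs0
    simpa using hε
  | succ n ih =>
    rintro x hx s ⟨hs0, hsn⟩
    rcases le_or_gt s 1 with hs1 | hs1
    · nlinarith [H x hx s ⟨hs0, hs1⟩]
    · have rest := ih (x + 1) (by linarith) (s - 1) ⟨by linarith, by push_cast at hsn; linarith⟩
      rw [add_add_sub_cancel] at rest
      calc |h (x + s) - h x| ≤ |h (x + s) - h (x + 1)| + |h (x + 1) - h x| := abs_sub_le _ _ _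
        _ ≤ ε * (s - 1 + 1) + ε := add_le_add rest (H x hx 1 ⟨zero_le_one, le_rfl⟩)
        _ = ε * (s + 1) := by ring

theorem exists_volume_le_eventually_abs_sub_lt (hm : Measurable h)
    (hh : ∀ u, Tendsto (fun x => h (x + u) - h x) atTop (𝓝 0))
    {x : ℕ → ℝ} (hx : Tendsto x atTop atTop) (a b : ℝ) {η ε : ℝ} (hη : 0 < η) (hε : 0 < ε) :
    ∃ t : Set ℝ, volume t ≤ ENNReal.ofReal η ∧
      ∀ᶠ n in atTop, ∀ v ∈ Icc a b \ t, |h (x n + v) - h (x n)| < ε := by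
  obtain ⟨t, -, -, ht, hunif⟩ := tendstoUniformlyOn_of_ae_tendsto
    (fun n =>
      ((hm.comp (measurable_const.add measurable_id)).sub measurable_const).stronglyMeasurable)
    stronglyMeasurable_zero measurableSet_Icc (μ := volume) (by simp)
    (ae_of_all _ fun v _ => (hh v).comp hx) hη
  refine ⟨t, ht, ?_⟩
  filter_upwards [Metric.tendstoUniformlyOn_iff.mp hunif ε hε] with n hn v hv
  simpa [Real.dist_eq, abs_sub_comm] using hn v hv

theorem exists_forall_Icc_abs_sub_le (hm : Measurable h)
    (hh : ∀ u, Tendsto (fun x => h (x + u) - h x) atTop (𝓝 0)) {ε : ℝ} (hε : 0 < ε) :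
    ∃ X, ∀ x ≥ X, ∀ u ∈ Icc (0 : ℝ) 1, |h (x + u) - h x| ≤ ε := by
  by_contra! hcon
  choose x hx u hu hgt using hcon
  have hxn : Tendsto (fun n : ℕ => x n) atTop atTop :=
    tendsto_atTop_mono (fun n => hx n) tendsto_natCast_atTop_atTop
  have hyn : Tendsto (fun n : ℕ => x n + u n) atTop atTop :=
    tendsto_atTop_mono (fun n => le_add_of_nonneg_right (hu n).1) hxn
  obtain ⟨t, ht, hev⟩ :=
    exists_volume_le_eventually_abs_sub_lt hm hh hxn 0 2 one_half_pos (half_pos hε)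
  obtain ⟨t', ht', hev'⟩ :=
    exists_volume_le_eventually_abs_sub_lt hm hh hyn (-1) 2 one_half_pos (half_pos hε)
  obtain ⟨n, hn, hn'⟩ := (hev.and hev').exists
  -- The exceptional sets have total measure at most `1 < volume [0, 2]`, so some `v` avoids both;
  -- then `h (x + u) - h x` is split through `x + v`.
  obtain ⟨v, hv, hvt, hvt'⟩ : ∃ v ∈ Icc (0 : ℝ) 2, v ∉ t ∧ v - u n ∉ t' := by
    by_contra! hcover
    have hsub : Icc (0 : ℝ) 2 ⊆ t ∪ (· + -u n) ⁻¹' t' := fun v hv =>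
      or_iff_not_imp_left.mpr (hcover v hv)
    have := (measure_mono hsub).trans (measure_union_le (μ := volume) _ _)
    rw [Real.volume_Icc, measure_preimage_add_right] at this
    have := this.trans (add_le_add ht ht')
    rw [← ENNReal.ofReal_add (by norm_num) (by norm_num),
      ENNReal.ofReal_le_ofReal_iff (by norm_num)] at this
    norm_num at this
  have h₁ := hn v ⟨hv, hvt⟩
  have h₂ := hn' (v - u n) ⟨⟨by linarith [(hu n).2, hv.1], by linarith [(hu n).1, hv.2]⟩, hvt'⟩
  rw [add_add_sub_cancel] at h₂
  have := abs_sub_le (h (x n + u n)) (h (x n + v)) (h (x n))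
  linarith [hgt n, abs_sub_comm (h (x n + u n)) (h (x n + v))]

end UniformConvergence

theorem setIntegral_abs_pos_abs_le (f : ℝ → ℝ) (r : ℝ) :
    ∫ z in {z : ℝ | 0 < |z| ∧ |z| ≤ r}, f |z| = 2 * ∫ x in Ioc 0 r, f x := by
  calc ∫ z in {z : ℝ | 0 < |z| ∧ |z| ≤ r}, f |z| = ∫ z, (Ioc 0 r).indicator f |z| := by
        change ∫ z in abs ⁻¹' Ioc 0 r, f |z| = _
        rw [← integral_indicator (measurableSet_Ioc.preimage continuous_abs.measurable)]
        rfl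
    _ = 2 * ∫ x in Ioc 0 r, f x := by
        rw [integral_comp_abs, setIntegral_indicator measurableSet_Ioc,
          inter_eq_right.2 Ioc_subset_Ioi_self]

theorem intervalIntegral.integral_rpow_mul_comp_mul_left (f : ℝ → ℝ) (s : ℝ) {a b : ℝ}
    (ha : 0 < a) (hb : 0 ≤ b) :
    ∫ x in 0..b, x ^ s * f (a * x) = (a ^ (s + 1))⁻¹ * ∫ u in 0..a * b, u ^ s * f u := by
  have hscale : ∀ x ∈ uIcc 0 b, x ^ s * f (a * x) = (a ^ s)⁻¹ * ((a * x) ^ s * f (a * x)) := by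
    intro x hx
    rw [uIcc_of_le hb] at hx
    rw [mul_rpow ha.le hx.1]
    field_simp
  rw [intervalIntegral.integral_congr hscale, intervalIntegral.integral_const_mul,
    intervalIntegral.integral_comp_mul_left (fun u => u ^ s * f u) ha.ne', mul_zero, smul_eq_mul,
    rpow_add_one ha.ne', mul_inv, mul_assoc]

theorem intervalIntegral.integral_rpow_mul_le_of_potter {L : ℝ → ℝ} {A b s δ : ℝ} (hA : 0 < A)
    (hAb : A ≤ b) (hδ : δ < s + 1) (hLb : 0 ≤ L b)
    (hP : ∀ w v, A ≤ w → w ≤ v → L w ≤ exp δ * (v / w) ^ δ * L v)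
    (hint : IntervalIntegrable (fun u => u ^ s * L u) volume A b) :
    ∫ u in A..b, u ^ s * L u ≤ exp δ / (s + 1 - δ) * b ^ (s + 1) * L b := by
  have hb : 0 < b := hA.trans_le hAb
  have hpt : ∀ u ∈ Icc A b, u ^ s * L u ≤ exp δ * b ^ δ * L b * u ^ (s - δ) := by
    intro u hu
    have hu0 : 0 < u := hA.trans_le hu.1
    calc u ^ s * L u ≤ u ^ s * (exp δ * (b / u) ^ δ * L b) :=
          mul_le_mul_of_nonneg_left (hP u b hu.1 hu.2) (by positivity)
      _ = exp δ * b ^ δ * L b * u ^ (s - δ) := by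
          rw [div_rpow hb.le hu0.le, rpow_sub hu0]
          field_simp
  have hpow : IntervalIntegrable (fun u => exp δ * b ^ δ * L b * u ^ (s - δ)) volume A b :=
    (intervalIntegral.intervalIntegrable_rpow' (by linarith)).const_mul _
  calc ∫ u in A..b, u ^ s * L u ≤ ∫ u in A..b, exp δ * b ^ δ * L b * u ^ (s - δ) :=
        intervalIntegral.integral_mono_on hAb hint hpow hpt
    _ = exp δ * b ^ δ * L b * ((b ^ (s - δ + 1) - A ^ (s - δ + 1)) / (s - δ + 1)) := by
        rw [intervalIntegral.integral_const_mul, integral_rpow (Or.inl (by linarith))]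
    _ ≤ exp δ * b ^ δ * L b * (b ^ (s - δ + 1) / (s - δ + 1)) := by
        have : 0 < s - δ + 1 := by linarith
        gcongr
        exact sub_le_self _ (by positivity)
    _ = exp δ / (s + 1 - δ) * b ^ (s + 1) * L b := by
        rw [show s - δ + 1 = s + 1 - δ by ring, rpow_sub hb]
        field_simp

def IsSlowlyVarying (L : ℝ → ℝ) : Prop :=
  ∀ c > (0 : ℝ), Tendsto (fun x => L (c * x) / L x) atTop (𝓝 1)

namespace IsSlowlyVarying

variable {L : ℝ → ℝ}

theorem tendsto_log_comp_exp_add_sub (hL : IsSlowlyVarying L) (hpos : ∀ x > 0, 0 < L x)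
    (u : ℝ) : Tendsto (fun x => log (L (exp (x + u))) - log (L (exp x))) atTop (𝓝 0) := by
  have := (continuousAt_log one_ne_zero).tendsto.comp
    ((hL (exp u) (exp_pos u)).comp tendsto_exp_atTop)
  rw [log_one] at this
  refine this.congr fun x => ?_
  simp only [Function.comp_apply, exp_add, mul_comm (exp x)]
  exact log_div (hpos _ (by positivity)).ne' (hpos _ (exp_pos x)).ne'

theorem potter_bound (hL : IsSlowlyVarying L) (hm : Measurable L) (hpos : ∀ x > 0, 0 < L x)
    {δ : ℝ} (hδ : 0 < δ) :
    ∃ A > 0, ∀ w v, A ≤ w → w ≤ v → L w ≤ exp δ * (v / w) ^ δ * L v := by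
  obtain ⟨X, hX⟩ := exists_forall_Icc_abs_sub_le (h := fun x => log (L (exp x)))
    (hm.comp measurable_exp).log (hL.tendsto_log_comp_exp_add_sub hpos) hδ
  refine ⟨exp X, exp_pos X, fun w v hw hwv => ?_⟩
  have hw0 : 0 < w := (exp_pos X).trans_le hw
  have hv0 : 0 < v := hw0.trans_le hwv
  have key := abs_sub_le_mul_add_one_of_forall_Icc (h := fun x => log (L (exp x))) hX
    (log w) ((le_log_iff_exp_le hw0).2 hw) (log v - log w) (sub_nonneg.2 (log_le_log hw0 hwv))
  simp only [add_sub_cancel, exp_log hw0, exp_log hv0] at key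
  rw [← log_le_log_iff (hpos w hw0) (by have := hpos v hv0; positivity), log_mul (by positivity)
    (hpos v hv0).ne', log_mul (exp_pos δ).ne' (by positivity), log_exp,
    log_rpow (div_pos hv0 hw0), log_div hv0.ne' hw0.ne']
  linarith [(abs_le.mp key).1]

theorem tendsto_rpow_mul_atTop (hL : IsSlowlyVarying L) (hm : Measurable L)
    (hpos : ∀ x > 0, 0 < L x) {ε : ℝ} (hε : 0 < ε) :
    Tendsto (fun x => x ^ ε * L x) atTop atTop := by
  obtain ⟨A, hA, hP⟩ := hL.potter_bound hm hpos (half_pos hε)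
  have hc : 0 < L A * A ^ (ε / 2) / exp (ε / 2) := by have := hpos A hA; positivity
  refine tendsto_atTop_mono' atTop ((eventually_ge_atTop A).mono fun x hx => ?_)
    ((tendsto_rpow_atTop (half_pos hε)).const_mul_atTop hc)
  have hx0 : 0 < x := hA.trans_le hx
  calc L A * A ^ (ε / 2) / exp (ε / 2) * x ^ (ε / 2)
      ≤ exp (ε / 2) * (x / A) ^ (ε / 2) * L x * A ^ (ε / 2) / exp (ε / 2) * x ^ (ε / 2) := by
        gcongr; exact hP A x le_rfl hx
    _ = x ^ ε * L x := by
        rw [div_rpow hx0.le hA.le]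
        field_simp
        rw [← rpow_natCast, ← rpow_mul hx0.le]
        ring_nf

theorem eventually_setIntegral_rpow_mul_div_le (hL : IsSlowlyVarying L) (hm : Measurable L)
    (hpos : ∀ x > 0, 0 < L x) {α : ℝ} (hα : α < 2)
    (hloc : ∀ b > 0, IntegrableOn (fun u => u ^ (1 - α) * L u) (Ioc 0 b)) {r : ℝ} (hr : 0 < r) :
    ∀ᶠ a in atTop, ∫ x in Ioc 0 r, x ^ (1 - α) * L (a * x) / L a ≤
      (1 + 2 * exp ((2 - α) / 2) / ((2 - α) / 2)) * r ^ (2 - α) := by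
  set δ := (2 - α) / 2 with hδ_def
  have hδ : 0 < δ := by linarith
  set g := fun u => u ^ (1 - α) * L u
  have hg : ∀ b > 0, IntervalIntegrable g volume 0 b := fun b hb =>
    (intervalIntegrable_iff_integrableOn_Ioc_of_le hb.le).2 (hloc b hb)
  obtain ⟨A, hA, hP⟩ := hL.potter_bound hm hpos hδ
  set M := ∫ u in 0..A, g u
  have hsmall : Tendsto (fun a => M * (a ^ (2 - α) * L a)⁻¹) atTop (𝓝 0) := by
    simpa using ((hL.tendsto_rpow_mul_atTop hm hpos (by linarith)).inv_tendsto_atTop).const_mul M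
  filter_upwards [eventually_gt_atTop 0, (tendsto_id.atTop_mul_const hr).eventually_ge_atTop A,
    (hL r hr).eventually_le_const one_lt_two,
    hsmall.eventually_le_const (rpow_pos_of_pos hr (2 - α))] with a ha haA hratio hM
  dsimp only [id] at haA
  have hLa : 0 < L a := hpos a ha
  have hLar : 0 < L (a * r) := hpos (a * r) (by positivity)
  have hgA : IntervalIntegrable g volume A (a * r) :=
    (hg (a * r) (by positivity)).mono_set (uIcc_subset_uIcc_right (mem_uIcc_of_le hA.le haA))
  have htail := intervalIntegral.integral_rpow_mul_le_of_potter hA haA (by linarith) hLar.le hP hgA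
  rw [show 1 - α + 1 = 2 - α by ring, show 2 - α - δ = δ by linarith] at htail
  calc ∫ x in Ioc 0 r, x ^ (1 - α) * L (a * x) / L a
      = (a ^ (2 - α) * L a)⁻¹ * ∫ u in 0..a * r, g u := by
        rw [integral_div, ← intervalIntegral.integral_of_le hr.le,
          intervalIntegral.integral_rpow_mul_comp_mul_left L _ ha hr.le,
          show 1 - α + 1 = 2 - α by ring, mul_inv]
        ring
    _ = (a ^ (2 - α) * L a)⁻¹ * (M + ∫ u in A..a * r, g u) := by
        rw [intervalIntegral.integral_add_adjacent_intervals (hg A hA) hgA]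
    _ ≤ (a ^ (2 - α) * L a)⁻¹ * (M + exp δ / δ * (a * r) ^ (2 - α) * L (a * r)) := by
        gcongr
    _ = M * (a ^ (2 - α) * L a)⁻¹ + exp δ / δ * (L (r * a) / L a) * r ^ (2 - α) := by
        rw [mul_rpow ha.le hr.le, mul_comm r a]
        field_simp
    _ ≤ r ^ (2 - α) + exp δ / δ * 2 * r ^ (2 - α) := by gcongr
    _ = (1 + 2 * exp δ / δ) * r ^ (2 - α) := by ring

end IsSlowlyVarying

/-- Let `α, β ∈ (1,2)` and let `L : (0,∞) → (0,∞)` be measurable, slowly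
varying at infinity, such that `z ↦ z^{1−α}·L(z)` is locally integrable on `(0,∞)`. Then
there exists `C > 0`, depending only on `α`, such that for every `r ∈ (0,1)` there is
`T₀ ≥ 1` with `∫_{0<|z|≤r} |z|^{1−α} · L(T^{1/(αβ)}·|z|)/L(T^{1/(αβ)}) dz ≤ C·r^{2−α}` for
all `T ≥ T₀`. -/
theorem stmt_9 (α β : ℝ) (hα : α ∈ Set.Ioo (1:ℝ) 2) (hβ : β ∈ Set.Ioo (1:ℝ) 2)
    (L : ℝ → ℝ) (hL_meas : Measurable L) (hL_pos : ∀ x > (0:ℝ), 0 < L x)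
    (hL_sv : ∀ c > (0:ℝ),
      Filter.Tendsto (fun x : ℝ => L (c * x) / L x) Filter.atTop (nhds 1))
    (hL_loc : ∀ b > (0:ℝ), IntegrableOn (fun z : ℝ => z ^ (1 - α) * L z) (Set.Ioc 0 b) volume) :
    ∃ C > (0:ℝ), ∀ r ∈ Set.Ioo (0:ℝ) 1, ∃ T₀ ≥ (1:ℝ), ∀ T ≥ T₀,
      (∫ z in {z : ℝ | 0 < |z| ∧ |z| ≤ r},
        |z| ^ (1 - α) * L (T ^ (1/(α * β)) * |z|) / L (T ^ (1/(α * β))))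
        ≤ C * r ^ (2 - α) := by
  obtain ⟨hα₁, hα₂⟩ := hα
  obtain ⟨hβ₁, -⟩ := hβ
  refine ⟨2 * (1 + 2 * exp ((2 - α) / 2) / ((2 - α) / 2)), by positivity, fun r hr => ?_⟩
  have hscale : Tendsto (fun T : ℝ => T ^ (1 / (α * β))) atTop atTop :=
    tendsto_rpow_atTop (one_div_pos.2 (mul_pos (by linarith) (by linarith)))
  obtain ⟨T₀, hT₀⟩ := eventually_atTop.mp (hscale.eventually
    (IsSlowlyVarying.eventually_setIntegral_rpow_mul_div_le hL_sv hL_meas hL_pos hα₂ hL_loc hr.1))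
  refine ⟨max 1 T₀, le_max_left _ _, fun T hT => ?_⟩
  set a := T ^ (1 / (α * β))
  rw [setIntegral_abs_pos_abs_le (fun x => x ^ (1 - α) * L (a * x) / L a)]
  linarith [hT₀ T (le_of_max_le_right hT)]
end

section
/- For β ∈ (1,2), the constant c := ∫_0^∞ (p_1(0) − p_1(u^{−1/β})) · u^{−1/β} du is finite, and for every t > 0 there exists a constant c₁, depending only on t and β, such that for every x ≠ 0, ∫_0^t (p_u(0) − p_u(x)) du ≤ min(c₁, c·|x|^{β−1}). -/
/-!
The densities are self-similar, `p_u(x) = u^{-1/β} p_1(x u^{-1/β})`, hence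
`p_u(0) - p_u(x) = |x|⁻¹ g(|x|^{-β} u)` for `g(u) = (p_1(0) - p_1(u^{-1/β})) u^{-1/β}`,
and the substitution `u ↦ |x|^β u` gives `∫_0^∞ (p_u(0) - p_u(x)) du = |x|^{β-1} ∫_0^∞ g`.
Since `1 - cos ≥ 0` the integrand is nonnegative, so truncating at `t` gives the bound
`c |x|^{β-1}`. The function `g` is integrable because
`0 ≤ p_1(0) - p_1(y) ≤ min(2 p_1(0), C y²)` (from `1 - cos θ ≤ θ²/2`), i.e.
`g(u) = O(u^{-1/β})` at `0` and `O(u^{-3/β})` at `∞`. The bound `c₁` comes from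
`p_u(0) - p_u(x) ≤ 2 p_u(0) = 2 p_1(0) u^{-1/β}`, integrable at `0` as `β > 1`.
-/

open MeasureTheory Set Real

theorem integrable_comp_abs_of_integrableOn_Ioi {E : Type*} [NormedAddCommGroup E]
    {f : ℝ → E} (hf : IntegrableOn f (Ioi 0)) : Integrable fun x => f |x| := by
  have hIoi : IntegrableOn (fun x => f |x|) (Ioi 0) :=
    hf.congr_fun (fun x hx => by rw [abs_of_pos hx]) measurableSet_Ioi
  have hIic : IntegrableOn (fun x => f |x|) (Iic 0) := by
    have hneg : MeasurableEmbedding fun x : ℝ => -x := (Homeomorph.neg ℝ).measurableEmbedding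
    rw [← Measure.map_neg_eq_self (volume : Measure ℝ), hneg.integrableOn_map_iff]
    simp only [Function.comp_def, abs_neg, neg_preimage, neg_Iic, neg_zero]
    exact (integrableOn_Ici_iff_integrableOn_Ioi (by simp)).2 hIoi
  simpa only [Iic_union_Ioi, integrableOn_univ] using hIic.union hIoi

section StableKernel

variable {β u : ℝ}

theorem integrable_abs_rpow_mul_exp_neg_mul_abs_rpow {s : ℝ} (hs : -1 < s) (hβ : 0 < β)
    (hu : 0 < u) : Integrable fun w : ℝ => |w| ^ s * exp (-(u * |w| ^ β)) :=
  integrable_comp_abs_of_integrableOn_Ioi (f := fun w => w ^ s * exp (-(u * w ^ β))) <| by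
    simpa only [neg_mul] using integrableOn_rpow_mul_exp_neg_mul_rpow hs hβ hu

theorem integrable_exp_neg_mul_abs_rpow (hβ : 0 < β) (hu : 0 < u) :
    Integrable fun w : ℝ => exp (-(u * |w| ^ β)) := by
  simpa using integrable_abs_rpow_mul_exp_neg_mul_abs_rpow neg_one_lt_zero hβ hu

theorem continuous_exp_neg_mul_abs_rpow (hβ : 0 ≤ β) (u : ℝ) :
    Continuous fun w : ℝ => exp (-(u * |w| ^ β)) := by
  have : Continuous fun w : ℝ => |w| ^ β := continuous_abs.rpow_const fun _ => Or.inr hβ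
  fun_prop

theorem integrable_cos_mul_mul_exp_neg_mul_abs_rpow (hβ : 0 < β) (hu : 0 < u) (x : ℝ) :
    Integrable fun w : ℝ => cos (x * w) * exp (-(u * |w| ^ β)) := by
  refine (integrable_exp_neg_mul_abs_rpow hβ hu).mono' ?_ (.of_forall fun w => ?_)
  · have := continuous_exp_neg_mul_abs_rpow hβ.le u
    exact (by fun_prop : Continuous _).aestronglyMeasurable
  · rw [norm_mul, norm_of_nonneg (exp_nonneg _)]
    exact mul_le_of_le_one_left (exp_nonneg _) (abs_cos_le_one _)

end StableKernel

noncomputable def stableDensity (β u x : ℝ) : ℝ :=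
  (2 * π)⁻¹ * ∫ w : ℝ, cos (x * w) * exp (-(u * |w| ^ β))

namespace stableDensity

variable {β u : ℝ}

theorem zero_sub_eq (hβ : 0 < β) (hu : 0 < u) (x : ℝ) :
    stableDensity β u 0 - stableDensity β u x
      = (2 * π)⁻¹ * ∫ w : ℝ, (1 - cos (x * w)) * exp (-(u * |w| ^ β)) := by
  rw [stableDensity, stableDensity, ← mul_sub, ← integral_sub
    (integrable_cos_mul_mul_exp_neg_mul_abs_rpow hβ hu 0)
    (integrable_cos_mul_mul_exp_neg_mul_abs_rpow hβ hu x)]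
  simp only [zero_mul, cos_zero, sub_mul, one_mul]

theorem integrable_one_sub_cos_mul (hβ : 0 < β) (hu : 0 < u) (x : ℝ) :
    Integrable fun w : ℝ => (1 - cos (x * w)) * exp (-(u * |w| ^ β)) := by
  simpa only [Pi.sub_def, zero_mul, cos_zero, sub_mul, one_mul] using
    (integrable_cos_mul_mul_exp_neg_mul_abs_rpow hβ hu 0).sub
      (integrable_cos_mul_mul_exp_neg_mul_abs_rpow hβ hu x)

theorem zero_sub_nonneg (hβ : 0 < β) (hu : 0 < u) (x : ℝ) :
    0 ≤ stableDensity β u 0 - stableDensity β u x := by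
  rw [zero_sub_eq hβ hu]
  exact mul_nonneg (by positivity) (integral_nonneg fun w =>
    mul_nonneg (sub_nonneg.2 (cos_le_one _)) (exp_nonneg _))

theorem zero_sub_le (hβ : 0 < β) (hu : 0 < u) (x : ℝ) :
    stableDensity β u 0 - stableDensity β u x ≤ 2 * stableDensity β u 0 := by
  rw [zero_sub_eq hβ hu, stableDensity, mul_left_comm, ← integral_const_mul (2 : ℝ)]
  refine mul_le_mul_of_nonneg_left (integral_mono (integrable_one_sub_cos_mul hβ hu x)
    ((integrable_cos_mul_mul_exp_neg_mul_abs_rpow hβ hu 0).const_mul 2) fun w => ?_)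
    (by positivity)
  rw [zero_mul, cos_zero, one_mul]
  gcongr
  linarith [neg_one_le_cos (x * w)]

theorem zero_sub_le_sq_mul (hβ : 0 < β) (hu : 0 < u) (x : ℝ) :
    stableDensity β u 0 - stableDensity β u x
      ≤ (2 * π)⁻¹ * (x ^ 2 / 2 * ∫ w : ℝ, w ^ 2 * exp (-(u * |w| ^ β))) := by
  have hsecond : Integrable fun w : ℝ => w ^ 2 * exp (-(u * |w| ^ β)) := by
    simpa only [rpow_two, sq_abs] using
      integrable_abs_rpow_mul_exp_neg_mul_abs_rpow (s := 2) (by norm_num) hβ hu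
  rw [zero_sub_eq hβ hu]
  refine mul_le_mul_of_nonneg_left ?_ (by positivity)
  rw [← integral_const_mul]
  refine integral_mono (integrable_one_sub_cos_mul hβ hu x) (hsecond.const_mul _) fun w => ?_
  have := one_sub_sq_div_two_le_cos (x := x * w)
  calc (1 - cos (x * w)) * exp (-(u * |w| ^ β))
      ≤ (x * w) ^ 2 / 2 * exp (-(u * |w| ^ β)) := by gcongr; linarith
    _ = x ^ 2 / 2 * (w ^ 2 * exp (-(u * |w| ^ β))) := by ring

theorem apply_neg (β u x : ℝ) : stableDensity β u (-x) = stableDensity β u x := by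
  simp only [stableDensity, neg_mul, cos_neg]

theorem apply_abs (β u x : ℝ) : stableDensity β u |x| = stableDensity β u x := by
  rcases abs_choice x with h | h <;> rw [h]
  exact apply_neg β u x

theorem eq_rpow_mul (hβ : β ≠ 0) (hu : 0 < u) (x : ℝ) :
    stableDensity β u x = u ^ (-(1 / β)) * stableDensity β 1 (x * u ^ (-(1 / β))) := by
  set s := u ^ (-(1 / β))
  have hs : 0 < s := rpow_pos_of_pos hu _
  have hsβ : s⁻¹ ^ β = u := by
    rw [← rpow_neg hu.le, neg_neg, ← rpow_mul hu.le, one_div_mul_cancel hβ, rpow_one]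
  have hsubst (w : ℝ) : cos (x * w) * exp (-(u * |w| ^ β))
      = cos (x * s * (s⁻¹ * w)) * exp (-(1 * |s⁻¹ * w| ^ β)) := by
    rw [mul_assoc, mul_inv_cancel_left₀ hs.ne', one_mul, abs_mul, abs_of_pos (inv_pos.2 hs),
      mul_rpow (inv_pos.2 hs).le (abs_nonneg w), hsβ]
  rw [stableDensity, stableDensity, funext hsubst,
    Measure.integral_comp_mul_left (fun v => cos (x * s * v) * exp (-(1 * |v| ^ β))), inv_inv,
    abs_of_pos hs, smul_eq_mul]
  ring

theorem continuous (hβ : 0 < β) (hu : 0 < u) : Continuous (stableDensity β u) := by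
  refine continuous_const.mul (continuous_of_dominated
    (fun x => (integrable_cos_mul_mul_exp_neg_mul_abs_rpow hβ hu x).aestronglyMeasurable)
    (fun x => .of_forall fun w => ?_) (integrable_exp_neg_mul_abs_rpow hβ hu)
    (.of_forall fun w => ?_))
  · rw [norm_mul, norm_of_nonneg (exp_nonneg _)]
    exact mul_le_of_le_one_left (exp_nonneg _) (abs_cos_le_one _)
  · fun_prop

end stableDensity

theorem integrableOn_Ioc_rpow {r t : ℝ} (hr : -1 < r) (ht : 0 ≤ t) :
    IntegrableOn (fun u : ℝ => u ^ r) (Ioc 0 t) :=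
  (intervalIntegrable_iff_integrableOn_Ioc_of_le ht).1
    (intervalIntegral.intervalIntegrable_rpow' hr)

noncomputable def stableGap (β u : ℝ) : ℝ :=
  (stableDensity β 1 0 - stableDensity β 1 (u ^ (-(1 / β)))) * u ^ (-(1 / β))

namespace stableGap

variable {β u : ℝ}

theorem nonneg (hβ : 0 < β) (hu : 0 ≤ u) : 0 ≤ stableGap β u :=
  mul_nonneg (stableDensity.zero_sub_nonneg hβ one_pos _) (rpow_nonneg hu _)

theorem le_rpow (hβ : 0 < β) (hu : 0 ≤ u) :
    stableGap β u ≤ 2 * stableDensity β 1 0 * u ^ (-(1 / β)) :=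
  mul_le_mul_of_nonneg_right (stableDensity.zero_sub_le hβ one_pos _) (rpow_nonneg hu _)

theorem le_mul_rpow (hβ : 0 < β) (hu : 0 < u) :
    stableGap β u
      ≤ (2 * π)⁻¹ * ((∫ w : ℝ, w ^ 2 * exp (-(1 * |w| ^ β))) / 2)
        * u ^ (-(1 / β) * 3) := by
  have hpow : (u ^ (-(1 / β))) ^ 2 * u ^ (-(1 / β)) = u ^ (-(1 / β) * 3) := by
    rw [← rpow_natCast, ← rpow_mul hu.le, ← rpow_add hu]
    ring_nf
  rw [← hpow]
  calc stableGap β u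
      ≤ (2 * π)⁻¹ * ((u ^ (-(1 / β))) ^ 2 / 2 * ∫ w : ℝ, w ^ 2 * exp (-(1 * |w| ^ β)))
        * u ^ (-(1 / β)) :=
        mul_le_mul_of_nonneg_right (stableDensity.zero_sub_le_sq_mul hβ one_pos _)
          (rpow_nonneg hu.le _)
    _ = _ := by ring

theorem continuousOn (hβ : 0 < β) : ContinuousOn (stableGap β) (Ioi 0) := by
  have hrpow : ContinuousOn (fun u : ℝ => u ^ (-(1 / β))) (Ioi 0) :=
    continuousOn_id.rpow_const fun u hu => Or.inl (ne_of_gt hu)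
  exact (continuousOn_const.sub
    ((stableDensity.continuous hβ one_pos).comp_continuousOn hrpow)).mul hrpow

theorem integrableOn_Ioi (hβ1 : 1 < β) (hβ3 : β < 3) : IntegrableOn (stableGap β) (Ioi 0) := by
  have hβ : 0 < β := by linarith
  have hdom {s : Set ℝ} {g : ℝ → ℝ} (hs : s ⊆ Ioi 0) (hsm : MeasurableSet s)
      (hg : IntegrableOn g s) (hle : ∀ u ∈ s, stableGap β u ≤ g u) :
      IntegrableOn (stableGap β) s := by
    refine hg.mono' ((continuousOn hβ).mono hs |>.aestronglyMeasurable hsm) ?_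
    refine (ae_restrict_iff' hsm).2 (.of_forall fun u hu => ?_)
    rw [norm_of_nonneg (nonneg hβ (le_of_lt (hs hu)))]
    exact hle u hu
  have hnear : IntegrableOn (stableGap β) (Ioc 0 1) := by
    exact hdom Ioc_subset_Ioi_self measurableSet_Ioc
      ((integrableOn_Ioc_rpow (neg_lt_neg ((div_lt_one hβ).2 hβ1)) zero_le_one).const_mul _)
      fun u hu => le_rpow hβ hu.1.le
  have hfar : IntegrableOn (stableGap β) (Ioi 1) := by
    refine hdom (Ioi_subset_Ioi zero_le_one) measurableSet_Ioi
      ((integrableOn_Ioi_rpow_of_lt ?_ one_pos).const_mul _)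
      fun u hu => le_mul_rpow hβ (zero_lt_one.trans hu)
    rw [neg_mul, neg_lt_neg_iff, div_mul_eq_mul_div, one_mul, one_lt_div hβ]
    exact hβ3
  simpa only [Ioc_union_Ioi_eq_Ioi zero_le_one] using hnear.union hfar

end stableGap

namespace stableDensity

variable {β x : ℝ}

theorem zero_sub_eq_stableGap (hβ : 0 < β) (hx : x ≠ 0) {u : ℝ} (hu : 0 < u) :
    stableDensity β u 0 - stableDensity β u x = |x|⁻¹ * stableGap β (|x| ^ (-β) * u) := by
  have hx' : 0 < |x| := abs_pos.2 hx
  have hpow : (|x| ^ (-β) * u) ^ (-(1 / β)) = |x| * u ^ (-(1 / β)) := by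
    rw [mul_rpow (rpow_nonneg hx'.le _) hu.le, ← rpow_mul hx'.le,
      show -β * -(1 / β) = 1 by field_simp, rpow_one]
  have habs : stableDensity β 1 (x * u ^ (-(1 / β)))
      = stableDensity β 1 (|x| * u ^ (-(1 / β))) := by
    rw [← apply_abs β 1 (x * _), abs_mul, abs_of_pos (rpow_pos_of_pos hu _)]
  rw [stableGap, hpow, eq_rpow_mul hβ.ne' hu, eq_rpow_mul hβ.ne' hu x, zero_mul, habs]
  field_simp

theorem integral_Ioi_zero_sub (hβ : 0 < β) (hx : x ≠ 0) :
    ∫ u in Ioi 0, (stableDensity β u 0 - stableDensity β u x)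
      = (∫ u in Ioi 0, stableGap β u) * |x| ^ (β - 1) := by
  have hx' : 0 < |x| := abs_pos.2 hx
  rw [setIntegral_congr_fun measurableSet_Ioi fun u hu => zero_sub_eq_stableGap hβ hx hu,
    integral_const_mul, integral_comp_mul_left_Ioi _ _ (rpow_pos_of_pos hx' _), mul_zero,
    smul_eq_mul, ← rpow_neg hx'.le, neg_neg, ← mul_assoc, ← rpow_neg_one, ← rpow_add hx',
    neg_add_eq_sub, mul_comm]

theorem integrableOn_Ioi_zero_sub (hβ1 : 1 < β) (hβ3 : β < 3) (hx : x ≠ 0) :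
    IntegrableOn (fun u => stableDensity β u 0 - stableDensity β u x) (Ioi 0) := by
  have hβ : 0 < β := by linarith
  have hscaled := (integrableOn_Ioi_comp_mul_left_iff (stableGap β) 0
    (rpow_pos_of_pos (abs_pos.2 hx) (-β))).2 (by simpa using stableGap.integrableOn_Ioi hβ1 hβ3)
  exact IntegrableOn.congr_fun (hscaled.const_mul |x|⁻¹)
    (fun u hu => (zero_sub_eq_stableGap hβ hx hu).symm) measurableSet_Ioi

theorem setIntegral_Ioc_zero_sub_le (hβ1 : 1 < β) (hβ3 : β < 3) (hx : x ≠ 0) {t : ℝ}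
    (ht : 0 < t) :
    ∫ u in Ioc 0 t, (stableDensity β u 0 - stableDensity β u x)
      ≤ ∫ u in Ioc 0 t, 2 * stableDensity β 1 0 * u ^ (-(1 / β)) := by
  have hβ : 0 < β := by linarith
  refine setIntegral_mono_on
    ((integrableOn_Ioi_zero_sub hβ1 hβ3 hx).mono_set Ioc_subset_Ioi_self)
    ((integrableOn_Ioc_rpow (neg_lt_neg ((div_lt_one hβ).2 hβ1)) ht.le).const_mul _)
    measurableSet_Ioc fun u hu => ?_
  calc stableDensity β u 0 - stableDensity β u x ≤ 2 * stableDensity β u 0 :=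
        zero_sub_le hβ hu.1 x
    _ = 2 * stableDensity β 1 0 * u ^ (-(1 / β)) := by
        rw [eq_rpow_mul hβ.ne' hu.1, zero_mul]
        ring

end stableDensity

/-- For `β ∈ (1,2)`, with
`p_u(x) := (2π)⁻¹ ∫ cos(xw)·e^{−u|w|^β} dw` the symmetric `β`-stable transition density,
the constant `c := ∫_0^∞ (p_1(0) − p_1(u^{−1/β}))·u^{−1/β} du` is finite (the integrand is
integrable on `(0,∞)`), and for every `t > 0` there exists a constant `c₁`, depending only
on `t` and `β`, such that for every `x ≠ 0`,
`∫_0^t (p_u(0) − p_u(x)) du ≤ min(c₁, c·|x|^{β−1})`. -/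
theorem stmt_12 (β : ℝ) (hβ : β ∈ Set.Ioo (1:ℝ) 2)
    (p : ℝ → ℝ → ℝ)
    (hp : ∀ u x : ℝ, p u x
      = (2 * Real.pi)⁻¹ * ∫ w : ℝ, Real.cos (x * w) * Real.exp (-(u * |w| ^ β))) :
    IntegrableOn (fun u : ℝ => (p 1 0 - p 1 (u ^ (-(1/β)))) * u ^ (-(1/β)))
      (Set.Ioi 0) volume ∧
    ∀ t > (0:ℝ), ∃ c₁ : ℝ, ∀ x : ℝ, x ≠ 0 →
      (∫ u in Set.Ioc (0:ℝ) t, (p u 0 - p u x))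
        ≤ min c₁
          ((∫ u in Set.Ioi (0:ℝ), (p 1 0 - p 1 (u ^ (-(1/β)))) * u ^ (-(1/β)))
            * |x| ^ (β - 1)) := by
  obtain ⟨hβ1, hβ2⟩ := hβ
  have hβ3 : β < 3 := by linarith
  obtain rfl : p = stableDensity β := funext fun u => funext (hp u)
  refine ⟨stableGap.integrableOn_Ioi hβ1 hβ3, fun t ht => ?_⟩
  refine ⟨_, fun x hx => le_min (stableDensity.setIntegral_Ioc_zero_sub_le hβ1 hβ3 hx ht) ?_⟩
  refine le_of_le_of_eq ?_ (stableDensity.integral_Ioi_zero_sub (by linarith) hx)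
  refine setIntegral_mono_set (stableDensity.integrableOn_Ioi_zero_sub hβ1 hβ3 hx)
    ((ae_restrict_iff' measurableSet_Ioi).2 (.of_forall fun u hu => ?_))
    Ioc_subset_Ioi_self.eventuallyLE
  exact stableDensity.zero_sub_nonneg (by linarith) hu x
end
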